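/- arXiv:1806.07033 — 10 statements merged into one kernel-verified Lean document; each statement's English description precedes it below -/
import Mathlib

section
/- For Hermitian positive semi-definite matrices A and B in C^{n×n}, the parallel sum A:B = A(A+B)^† B is Hermitian positive semi-definite. -/
open scoped Matrix Matrix.Norms.L2Operator ComplexOrder

/-- `MPInv A B` means `B` is the Moore-Penrose inverse of `A`. -/
def MPInv {n : ℕ} (A B : Matrix (Fin n) (Fin n) ℂ) : Prop :=
  A * B * A = A ∧ B * A * B = B ∧ (A * B).IsHermitian ∧ (B * A).IsHermitian

/-!
Of `G = (A + B)^†` only the identity `S G S = S` for `S = A + B` is needed. Since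
`ker S ⊆ ker A`, it gives `A G S = A`, and likewise for `Gᴴ`. These identities turn `A G B`
into `(1 - G A)ᴴ A (1 - G A) + (G A)ᴴ B (G A)`, a sum of congruences of `A` and `B`.
-/

theorem mul_mul_eq_star_mul_mul_add_star_mul_mul {R : Type*} [Ring R] [StarRing R] {a b g : R}
    (ha : IsSelfAdjoint a) (hb : IsSelfAdjoint b) (h₁ : a * g * (a + b) = a)
    (h₂ : a * star g * (a + b) = a) :
    a * g * b = star (1 - g * a) * a * (1 - g * a) + star (g * a) * b * (g * a) := by
  have h₃ : (a + b) * g * a = a := by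
    simpa [star_mul, ha.star_eq, hb.star_eq, mul_assoc] using congrArg star h₂
  have h₄ : a * star g * a = a * g * a :=
    calc a * star g * a = a * star g * ((a + b) * g * a) := by rw [h₃]
      _ = a * star g * (a + b) * g * a := by simp only [mul_assoc]
      _ = a * g * a := by rw [h₂]
  have hrhs : star (1 - g * a) * a * (1 - g * a) + star (g * a) * b * (g * a) =
      a - a * g * a - a * star g * a + a * star g * (a + b) * g * a := by
    simp only [star_sub, star_one, star_mul, ha.star_eq]
    noncomm_ring
  have hlhs : a * g * b = a * g * (a + b) - a * g * a := by noncomm_ring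
  rw [hrhs, hlhs, h₁, h₂, h₄]
  abel

namespace Matrix.PosSemidef

variable {n 𝕜 : Type*} [Fintype n] [RCLike 𝕜] {A B : Matrix n n 𝕜}

theorem mulVec_eq_zero_of_add_mulVec_eq_zero (hA : A.PosSemidef) (hB : B.PosSemidef)
    {x : n → 𝕜} (hx : (A + B) *ᵥ x = 0) : A *ᵥ x = 0 := by
  have hsum : star x ⬝ᵥ A *ᵥ x + star x ⬝ᵥ B *ᵥ x = 0 := by
    rw [← dotProduct_add, ← add_mulVec, hx, dotProduct_zero]
  rw [← hA.dotProduct_mulVec_zero_iff]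
  exact ((add_eq_zero_iff_of_nonneg (hA.dotProduct_mulVec_nonneg x)
    (hB.dotProduct_mulVec_nonneg x)).mp hsum).1

theorem mul_eq_zero_of_add_mul_eq_zero (hA : A.PosSemidef) (hB : B.PosSemidef)
    {X : Matrix n n 𝕜} (hX : (A + B) * X = 0) : A * X = 0 := by
  refine ext_iff_mulVec.mpr fun v => ?_
  rw [← mulVec_mulVec, zero_mulVec]
  exact hA.mulVec_eq_zero_of_add_mulVec_eq_zero hB (by rw [mulVec_mulVec, hX, zero_mulVec])

theorem mul_mul_add_eq_self (hA : A.PosSemidef) (hB : B.PosSemidef) {G : Matrix n n 𝕜}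
    (hG : (A + B) * G * (A + B) = A + B) : A * G * (A + B) = A := by
  classical
  have h : A * (1 - G * (A + B)) = 0 := hA.mul_eq_zero_of_add_mul_eq_zero hB <| by
    rw [Matrix.mul_sub, Matrix.mul_one, ← Matrix.mul_assoc, hG, sub_self]
  rw [Matrix.mul_sub, Matrix.mul_one, sub_eq_zero, ← Matrix.mul_assoc] at h
  exact h.symm

theorem mul_mul_of_add_mul_mul_add (hA : A.PosSemidef) (hB : B.PosSemidef) {G : Matrix n n 𝕜}
    (hG : (A + B) * G * (A + B) = A + B) : (A * G * B).PosSemidef := by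
  classical
  have hG' : (A + B) * Gᴴ * (A + B) = A + B := by
    simpa [conjTranspose_mul, (hA.add hB).1.eq, Matrix.mul_assoc] using
      congrArg Matrix.conjTranspose hG
  rw [mul_mul_eq_star_mul_mul_add_star_mul_mul hA.1 hB.1 (hA.mul_mul_add_eq_self hB hG)
    (hA.mul_mul_add_eq_self hB hG')]
  exact (hA.conjTranspose_mul_mul_same _).add (hB.conjTranspose_mul_mul_same _)

end Matrix.PosSemidef

/-- The parallel sum of PSD matrices is PSD. -/
theorem parallel_sum_posSemidef {n : ℕ} (A B Sd : Matrix (Fin n) (Fin n) ℂ)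
    (hA : A.PosSemidef) (hB : B.PosSemidef) (hSd : MPInv (A + B) Sd) :
    (A * Sd * B).PosSemidef :=
  hA.mul_mul_of_add_mul_mul_add hB hSd.1
end

section
/- For Hermitian positive semi-definite matrices A and B in C^{n×n}, the range of A:B equals the intersection of the range of A and the range of B. -/
open scoped Matrix Matrix.Norms.L2Operator ComplexOrder

private lemma psd_add_eq_zero {n : ℕ} {M N : Matrix (Fin n) (Fin n) ℂ}
    (hM : M.PosSemidef) (hN : N.PosSemidef) (h : M + N = 0) : M = 0 := by
  have key : ∀ v : Fin n → ℂ, M *ᵥ v = 0 := by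
    intro v
    rw [← hM.dotProduct_mulVec_zero_iff]
    have h1 : star v ⬝ᵥ M *ᵥ v + star v ⬝ᵥ N *ᵥ v = 0 := by
      rw [← dotProduct_add, ← Matrix.add_mulVec, h, Matrix.zero_mulVec,
        dotProduct_zero]
    have hMv := hM.dotProduct_mulVec_nonneg v
    have hNv := hN.dotProduct_mulVec_nonneg v
    have : star v ⬝ᵥ M *ᵥ v = - (star v ⬝ᵥ N *ᵥ v) := by linear_combination (norm := noncomm_ring) h1
    rw [this] at hMv ⊢
    have : star v ⬝ᵥ N *ᵥ v = 0 := le_antisymm (by simpa using hMv) hNv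
    rw [this, neg_zero]
  ext i j
  have := congrFun (key (Pi.single j 1)) i
  simpa using this

/-- If `Q` is Hermitian with `Q * (M + N) * Q = 0` for PSD `M`, `N`, then `M * Q = 0`. -/
private lemma psd_cancel {n : ℕ} {M Q : Matrix (Fin n) (Fin n) ℂ}
    (hM : M.PosSemidef) (hQ : Q.IsHermitian) (h : Q * M * Q = 0) : M * Q = 0 := by
  obtain ⟨C, rfl⟩ : ∃ C : Matrix (Fin n) (Fin n) ℂ, M = Cᴴ * C := by
    open scoped MatrixOrder in exact CStarAlgebra.nonneg_iff_eq_star_mul_self.mp hM.nonneg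
  have h2 : (C * Q)ᴴ * (C * Q) = 0 := by
    rw [Matrix.conjTranspose_mul, hQ.eq]
    calc Q * Cᴴ * (C * Q) = Q * (Cᴴ * C) * Q := by noncomm_ring
      _ = 0 := h
  have := Matrix.conjTranspose_mul_self_eq_zero.mp h2
  calc Cᴴ * C * Q = Cᴴ * (C * Q) := by noncomm_ring
    _ = 0 := by rw [this, Matrix.mul_zero]

/-- If `R` is Hermitian and `R * (A + B) = 0` for PSD `A`, `B`, then `R * A = 0 = A * R`. -/
private lemma psd_kill {n : ℕ} {A B R : Matrix (Fin n) (Fin n) ℂ}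
    (hA : A.PosSemidef) (hB : B.PosSemidef) (hR : R.IsHermitian)
    (hRAB : R * (A + B) = 0) : A * R = 0 ∧ R * A = 0 := by
  have hsum0 : R * A * R + R * B * R = 0 := by
    calc R * A * R + R * B * R = R * (A + B) * R := by noncomm_ring
      _ = 0 := by rw [hRAB, Matrix.zero_mul]
  have hRARpsd : (R * A * R).PosSemidef := by
    have := hA.mul_mul_conjTranspose_same Rᴴ
    rwa [Matrix.conjTranspose_conjTranspose, hR.eq] at this
  have hRBRpsd : (R * B * R).PosSemidef := by
    have := hB.mul_mul_conjTranspose_same Rᴴ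
    rwa [Matrix.conjTranspose_conjTranspose, hR.eq] at this
  have hRAR : R * A * R = 0 := psd_add_eq_zero hRARpsd hRBRpsd hsum0
  have hAR : A * R = 0 := psd_cancel hA hR hRAR
  refine ⟨hAR, ?_⟩
  have := congrArg Matrix.conjTranspose hAR
  rwa [Matrix.conjTranspose_mul, hR.eq, hA.1.eq, Matrix.conjTranspose_zero] at this

/-- The range of A:B is the intersection of the ranges of A and B. -/
theorem parallel_sum_range {n : ℕ} (A B Sd : Matrix (Fin n) (Fin n) ℂ)
    (hA : A.PosSemidef) (hB : B.PosSemidef) (hSd : MPInv (A + B) Sd) :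
    LinearMap.range (A * Sd * B).mulVecLin
      = LinearMap.range A.mulVecLin ⊓ LinearMap.range B.mulVecLin := by
  obtain ⟨h1, h2, h3, h4⟩ := hSd
  have hQ1 : (1 - Sd * (A + B)).IsHermitian := (Matrix.isHermitian_one).sub h4
  have hQ2 : (1 - (A + B) * Sd).IsHermitian := (Matrix.isHermitian_one).sub h3
  have hQ1AB : (1 - Sd * (A + B)) * (A + B) = 0 := by
    rw [Matrix.sub_mul, Matrix.one_mul, sub_eq_zero, Matrix.mul_assoc]
    have h1' : (A + B) * (Sd * (A + B)) = A + B := by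
      rw [← Matrix.mul_assoc]; exact h1
    have := congrArg Matrix.conjTranspose h1'
    rw [Matrix.conjTranspose_mul, h4.eq, (hA.1.add hB.1).eq] at this
    rw [Matrix.mul_assoc] at this
    exact this.symm
  have hQ2AB : (1 - (A + B) * Sd) * (A + B) = 0 := by
    rw [Matrix.sub_mul, Matrix.one_mul, sub_eq_zero]
    exact h1.symm
  obtain ⟨hAQ1, hQ1A⟩ := psd_kill hA hB hQ1 hQ1AB
  obtain ⟨hBQ1, hQ1B⟩ := psd_kill hB hA hQ1 (by rwa [add_comm B A])
  obtain ⟨hAQ2, hQ2A⟩ := psd_kill hA hB hQ2 hQ2AB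
  obtain ⟨hBQ2, hQ2B⟩ := psd_kill hB hA hQ2 (by rwa [add_comm B A])
  -- extracted identities
  have idA : A * Sd * (A + B) = A := by
    rw [Matrix.mul_sub, Matrix.mul_one, sub_eq_zero, ← Matrix.mul_assoc] at hAQ1
    exact hAQ1.symm
  have idA2 : (A + B) * Sd * A = A := by
    rw [Matrix.sub_mul, Matrix.one_mul, sub_eq_zero] at hQ2A
    exact hQ2A.symm
  have idB2 : (A + B) * Sd * B = B := by
    rw [Matrix.sub_mul, Matrix.one_mul, sub_eq_zero] at hQ2B
    exact hQ2B.symm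
  -- A * Sd * B = B * Sd * A
  have hsym : A * Sd * B = B * Sd * A := by
    have e1 : A * Sd * B = A - A * Sd * A := by
      linear_combination (norm := noncomm_ring) idA
    have e2 : B * Sd * A = A - A * Sd * A := by
      linear_combination (norm := noncomm_ring) idA2
    rw [e1, e2]
  apply le_antisymm
  · rintro y ⟨x, rfl⟩
    constructor
    · exact ⟨(Sd * B).mulVec x, by
        simp [Matrix.mulVecLin_apply, Matrix.mulVec_mulVec, Matrix.mul_assoc]⟩
    · refine ⟨(Sd * A).mulVec x, ?_⟩
      simp only [Matrix.mulVecLin_apply, Matrix.mulVec_mulVec]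
      rw [← Matrix.mul_assoc, ← hsym]
  · rintro y ⟨⟨u, hu⟩, ⟨v, hv⟩⟩
    refine ⟨u + v, ?_⟩
    simp only [Matrix.mulVecLin_apply] at hu hv ⊢
    have : (A * Sd * B) *ᵥ (u + v) = (A * Sd * B) *ᵥ u + (A * Sd * B) *ᵥ v := by
      rw [Matrix.mulVec_add]
    rw [this]
    have step1 : (A * Sd * B) *ᵥ u = (B * Sd * A) *ᵥ u := by rw [hsym]
    rw [step1]
    have e1 : (B * Sd * A) *ᵥ u = (B * Sd) *ᵥ y := by
      rw [← hu, ← Matrix.mulVec_mulVec, Matrix.mulVec_mulVec]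
    have e2 : (A * Sd * B) *ᵥ v = (A * Sd) *ᵥ y := by
      rw [← hv, ← Matrix.mulVec_mulVec, Matrix.mulVec_mulVec]
    rw [e1, e2]
    have : (B * Sd) *ᵥ y + (A * Sd) *ᵥ y = ((A + B) * Sd) *ᵥ y := by
      rw [← Matrix.add_mulVec, Matrix.add_mul, add_comm (A*Sd) (B*Sd)]
    rw [this, ← hu, Matrix.mulVec_mulVec]
    rw [idA2]
end

section
/- For Hermitian positive semi-definite matrices A and B in C^{n×n}, the operator 2-norm satisfies ‖A:B‖ ≤ ‖A‖·‖B‖/(‖A‖+‖B‖), provided A+B ≠ 0. -/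
open scoped Matrix Matrix.Norms.L2Operator ComplexOrder MatrixOrder

namespace ParallelSumAux

variable {n : ℕ}

open Matrix

/-- Uniqueness of the Moore-Penrose inverse. -/
lemma mp_unique {S X Y : Matrix (Fin n) (Fin n) ℂ} (hX : MPInv S X) (hY : MPInv S Y) :
    X = Y := by
  obtain ⟨hX1, hX2, hX3, hX4⟩ := hX
  obtain ⟨hY1, hY2, hY3, hY4⟩ := hY
  have hSX : S * X = S * Y := by
    calc S * X = (S * Y * S) * X := by rw [hY1]
    _ = (S * Y) * (S * X) := by noncomm_ring
    _ = (S * Y)ᴴ * (S * X)ᴴ := by rw [hY3, hX3]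
    _ = Yᴴ * (S * X * S)ᴴ := by simp only [conjTranspose_mul, Matrix.mul_assoc]
    _ = Yᴴ * Sᴴ := by rw [hX1]
    _ = (S * Y)ᴴ := by rw [conjTranspose_mul]
    _ = S * Y := hY3
  have hXS : X * S = Y * S := by
    calc X * S = X * (S * Y * S) := by rw [hY1]
    _ = (X * S) * (Y * S) := by noncomm_ring
    _ = (X * S)ᴴ * (Y * S)ᴴ := by rw [hX4, hY4]
    _ = (S * X * S)ᴴ * Yᴴ := by simp only [conjTranspose_mul, Matrix.mul_assoc]
    _ = Sᴴ * Yᴴ := by rw [hX1]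
    _ = (Y * S)ᴴ := by rw [conjTranspose_mul]
    _ = Y * S := hY4
  calc X = X * S * X := hX2.symm
  _ = X * (S * Y) := by rw [Matrix.mul_assoc, hSX]
  _ = (Y * S) * Y := by rw [← Matrix.mul_assoc, hXS]
  _ = Y := hY2

/-- The Moore-Penrose inverse of a Hermitian matrix is Hermitian. -/
lemma sd_herm {S X : Matrix (Fin n) (Fin n) ℂ} (hS : S.IsHermitian) (hX : MPInv S X) :
    X.IsHermitian := by
  obtain ⟨h1, h2, h3, h4⟩ := hX
  have hS' : Sᴴ = S := hS
  have hmp : MPInv S Xᴴ := by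
    refine ⟨?_, ?_, ?_, ?_⟩
    · calc S * Xᴴ * S = (Sᴴ * X * Sᴴ)ᴴ := by
            simp only [conjTranspose_mul, conjTranspose_conjTranspose, Matrix.mul_assoc]
      _ = (S * X * S)ᴴ := by rw [hS']
      _ = Sᴴ := by rw [h1]
      _ = S := hS'
    · calc Xᴴ * S * Xᴴ = (X * Sᴴ * X)ᴴ := by
            simp only [conjTranspose_mul, conjTranspose_conjTranspose, Matrix.mul_assoc]
      _ = (X * S * X)ᴴ := by rw [hS']
      _ = Xᴴ := by rw [h2]
    · show (S * Xᴴ)ᴴ = S * Xᴴ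
      have e1 : (S * Xᴴ)ᴴ = X * S := by
        rw [conjTranspose_mul, conjTranspose_conjTranspose, hS']
      have e2 : S * Xᴴ = X * S := by
        calc S * Xᴴ = Sᴴ * Xᴴ := by rw [hS']
        _ = (X * S)ᴴ := by rw [conjTranspose_mul]
        _ = X * S := h4
      rw [e1, e2]
    · show (Xᴴ * S)ᴴ = Xᴴ * S
      have e1 : (Xᴴ * S)ᴴ = S * X := by
        rw [conjTranspose_mul, conjTranspose_conjTranspose, hS']
      have e2 : Xᴴ * S = S * X := by
        calc Xᴴ * S = Xᴴ * Sᴴ := by rw [hS']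
        _ = (S * X)ᴴ := by rw [conjTranspose_mul]
        _ = S * X := h3
      rw [e1, e2]
  exact mp_unique hmp ⟨h1, h2, h3, h4⟩

noncomputable abbrev φ {n : ℕ} : Matrix (Fin n) (Fin n) ℂ ≃⋆ₐ[ℂ]
    (EuclideanSpace ℂ (Fin n) →L[ℂ] EuclideanSpace ℂ (Fin n)) :=
  Matrix.toEuclideanCLM (𝕜 := ℂ)

/-- Transfer: positive semidefiniteness of a matrix is nonnegativity of the associated CLM. -/
lemma psd_iff_clm (A : Matrix (Fin n) (Fin n) ℂ) :
    A.PosSemidef ↔ 0 ≤ φ A := by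
  rw [ContinuousLinearMap.nonneg_iff_isPositive, ← ContinuousLinearMap.isPositive_toLinearMap_iff]
  exact Matrix.isPositive_toEuclideanLin_iff.symm

/-- A matrix that is both PSD and negative-semidefinite is zero. -/
lemma psd_antisymm {M : Matrix (Fin n) (Fin n) ℂ} (h1 : M.PosSemidef)
    (h2 : (-M).PosSemidef) : M = 0 := by
  rw [psd_iff_clm] at h1 h2
  rw [map_neg] at h2
  have : φ M = 0 := le_antisymm (by simpa [neg_nonneg] using h2) h1
  have := congrArg φ.symm this
  simpa using this

lemma psd_smul {M : Matrix (Fin n) (Fin n) ℂ} (hM : M.PosSemidef) {r : ℝ} (hr : 0 ≤ r) :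
    ((r : ℂ) • M).PosSemidef := by
  refine Matrix.PosSemidef.of_dotProduct_mulVec_nonneg ?_ ?_
  · have : ((r:ℂ) • M)ᴴ = star (r:ℂ) • Mᴴ := Matrix.conjTranspose_smul (r:ℂ) M
    rw [Matrix.IsHermitian, this, hM.1]
    simp [Complex.star_def, Complex.conj_ofReal]
  · intro x
    rw [Matrix.smul_mulVec, dotProduct_smul, smul_eq_mul]
    exact mul_nonneg (by exact_mod_cast hr) (hM.dotProduct_mulVec_nonneg x)

/-- `A ≤ ‖A‖ • 1` for PSD matrices. -/
lemma psd_norm_sub {M : Matrix (Fin n) (Fin n) ℂ} (hM : M.PosSemidef) :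
    ((‖M‖ : ℂ) • (1 : Matrix (Fin n) (Fin n) ℂ) - M).PosSemidef := by
  rw [psd_iff_clm, map_sub, _root_.map_smul, _root_.map_one]
  have h0 : 0 ≤ φ M := (psd_iff_clm M).mp hM
  have hsa : IsSelfAdjoint (φ M) := .of_nonneg h0
  have h1 : φ M ≤ algebraMap ℝ _ ‖φ M‖ := hsa.le_algebraMap_norm_self
  have h2 : algebraMap ℝ (EuclideanSpace ℂ (Fin n) →L[ℂ] EuclideanSpace ℂ (Fin n)) ‖φ M‖
      = (‖M‖ : ℂ) • 1 := by
    rw [Algebra.algebraMap_eq_smul_one]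
    rfl
  rw [← h2]
  exact sub_nonneg.mpr h1

/-- From `0 ≤ M ≤ c • 1` conclude `‖M‖ ≤ c`. -/
lemma norm_le_of_psd {M : Matrix (Fin n) (Fin n) ℂ} {c : ℝ} (hM : M.PosSemidef)
    (h : (((c : ℂ)) • (1 : Matrix (Fin n) (Fin n) ℂ) - M).PosSemidef) (hc : 0 ≤ c) :
    ‖M‖ ≤ c := by
  rw [psd_iff_clm] at hM h
  rw [map_sub, _root_.map_smul, _root_.map_one] at h
  have h2 : algebraMap ℝ (EuclideanSpace ℂ (Fin n) →L[ℂ] EuclideanSpace ℂ (Fin n)) c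
      = (c : ℂ) • 1 := by
    rw [Algebra.algebraMap_eq_smul_one]
    rfl
  have h' : φ M ≤ algebraMap ℝ _ c := by
    rw [h2]
    exact sub_nonneg.mp h
  calc ‖M‖ = ‖φ M‖ := rfl
  _ ≤ c := (CStarAlgebra.norm_le_iff_le_algebraMap _ hc hM).mpr h'

/-- If `1 - X * Xᴴ` is PSD then so is `1 - Xᴴ * X`. -/
lemma one_sub_conj_psd {X : Matrix (Fin n) (Fin n) ℂ} (h : (1 - X * Xᴴ).PosSemidef) :
    (1 - Xᴴ * X).PosSemidef := by
  rw [psd_iff_clm, map_sub, _root_.map_one, _root_.map_mul] at h ⊢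
  have hstar : φ (Xᴴ) = star (φ X) := map_star φ X
  rw [hstar] at h ⊢
  set x := φ X
  have h1 : x * star x ≤ 1 := sub_nonneg.mp h
  have h2 : (0 : EuclideanSpace ℂ (Fin n) →L[ℂ] EuclideanSpace ℂ (Fin n)) ≤ x * star x :=
    mul_star_self_nonneg x
  have h3 : ‖x * star x‖ ≤ 1 := (CStarAlgebra.norm_le_one_iff_of_nonneg _ h2).mpr h1
  have e1 : ‖star x * x‖ = ‖x‖ * ‖x‖ := @CStarRing.norm_star_mul_self _ _ _ (by infer_instance) x
  have e2 : ‖x * star x‖ = ‖x‖ * ‖x‖ := @CStarRing.norm_self_mul_star _ _ _ (by infer_instance) x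
  have h4 : ‖star x * x‖ ≤ 1 := by rw [e1, ← e2]; exact h3
  have h5 : (0 : EuclideanSpace ℂ (Fin n) →L[ℂ] EuclideanSpace ℂ (Fin n)) ≤ star x * x :=
    star_mul_self_nonneg x
  exact sub_nonneg.mpr ((CStarAlgebra.norm_le_one_iff_of_nonneg _ h5).mp h4)

end ParallelSumAux

open ParallelSumAux in
/-- Norm bound ‖A:B‖ ≤ ‖A‖‖B‖/(‖A‖+‖B‖). -/
theorem parallel_sum_norm_le {n : ℕ} (A B Sd : Matrix (Fin n) (Fin n) ℂ)
    (hA : A.PosSemidef) (hB : B.PosSemidef) (hAB : A + B ≠ 0)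
    (hSd : MPInv (A + B) Sd) :
    ‖A * Sd * B‖ ≤ ‖A‖ * ‖B‖ / (‖A‖ + ‖B‖) := by
  have hS : (A + B).PosSemidef := hA.add hB
  set S := A + B with hSdef
  obtain ⟨h1, h2, h3, h4⟩ := hSd
  have hSH : Sᴴ = S := hS.1
  have hSdH : Sdᴴ = Sd := sd_herm hS.1 ⟨h1, h2, h3, h4⟩
  have hAH : Aᴴ = A := hA.1
  have hBH : Bᴴ = B := hB.1
  have hSdPSD : Sd.PosSemidef := by
    have e : Sd = Sdᴴ * S * Sd := by rw [hSdH]; exact h2.symm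
    rw [e]; exact hS.conjTranspose_mul_mul_same Sd
  -- the projection complement `F` kills `A` and `B`
  set F := (1 : Matrix (Fin n) (Fin n) ℂ) - S * Sd with hF
  have hFH : Fᴴ = F := by
    rw [hF, Matrix.conjTranspose_sub, Matrix.conjTranspose_one, h3]
  have hFS : F * S = 0 := by
    rw [hF, sub_mul, one_mul, h1, sub_self]
  have hkill : ∀ C : Matrix (Fin n) (Fin n) ℂ, C.PosSemidef → (S - C).PosSemidef →
      F * C = 0 := by
    intro C hC hSC
    have p1 : (F * C * Fᴴ).PosSemidef := hC.mul_mul_conjTranspose_same F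
    have p2 : (-(F * C * Fᴴ)).PosSemidef := by
      have e : -(F * C * Fᴴ) = F * (S - C) * Fᴴ := by
        rw [mul_sub, hFS, zero_sub, neg_mul]
      rw [e]; exact hSC.mul_mul_conjTranspose_same F
    have hz : F * C * Fᴴ = 0 := psd_antisymm p1 p2
    obtain ⟨L, hL⟩ := CStarAlgebra.nonneg_iff_eq_star_mul_self.mp hC.nonneg
    rw [Matrix.star_eq_conjTranspose] at hL
    have hz2 : (F * Lᴴ) * (F * Lᴴ)ᴴ = 0 := by
      calc (F * Lᴴ) * (F * Lᴴ)ᴴ = F * (Lᴴ * L) * Fᴴ := by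
            rw [Matrix.conjTranspose_mul, Matrix.conjTranspose_conjTranspose]
            noncomm_ring
      _ = 0 := by rw [← hL, hz]
    have hFL : F * Lᴴ = 0 := Matrix.self_mul_conjTranspose_eq_zero.mp hz2
    calc F * C = F * Lᴴ * L := by rw [hL, Matrix.mul_assoc]
    _ = 0 := by rw [hFL, zero_mul]
  have hFA : F * A = 0 := hkill A hA (by rw [hSdef]; simpa using hB)
  have hFB : F * B = 0 := hkill B hB (by rw [hSdef]; simpa using hA)
  have hSSdA : S * Sd * A = A := by
    rw [hF, sub_mul, one_mul, sub_eq_zero] at hFA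
    exact hFA.symm
  have hSSdB : S * Sd * B = B := by
    rw [hF, sub_mul, one_mul, sub_eq_zero] at hFB
    exact hFB.symm
  have hASdS : A * Sd * S = A := by
    have e := congrArg Matrix.conjTranspose hSSdA
    simp only [Matrix.conjTranspose_mul, hAH, hSdH, hSH] at e
    rw [← Matrix.mul_assoc] at e
    exact e
  have hBSdS : B * Sd * S = B := by
    have e := congrArg Matrix.conjTranspose hSSdB
    simp only [Matrix.conjTranspose_mul, hBH, hSdH, hSH] at e
    rw [← Matrix.mul_assoc] at e
    exact e
  set M := A * Sd * B with hM
  have idA : A * Sd * A = A - M := by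
    refine eq_sub_of_add_eq ?_
    rw [hM, ← mul_add, ← hSdef]
    rw [Matrix.mul_assoc] at hASdS ⊢
    exact hASdS
  have hMH : Mᴴ = M := by
    have e : M = A - A * Sd * A := by rw [idA, sub_sub_cancel]
    rw [e]
    simp [Matrix.conjTranspose_sub, Matrix.conjTranspose_mul, hAH, hSdH, Matrix.mul_assoc]
  have hBSdA : B * Sd * A = M := by
    calc B * Sd * A = Mᴴ := by
          rw [hM]
          simp [Matrix.conjTranspose_mul, hAH, hBH, hSdH, Matrix.mul_assoc]
    _ = M := hMH
  have idB : B * Sd * B = B - M := by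
    refine eq_sub_of_add_eq ?_
    rw [← hBSdA, ← mul_add, add_comm B A, ← hSdef]
    rw [Matrix.mul_assoc] at hBSdS ⊢
    exact hBSdS
  -- square roots
  set T := CFC.sqrt A with hT
  set R := CFC.sqrt Sd with hR
  have hT2 : T * T = A := by rw [← pow_two]; exact CFC.sq_sqrt A hA.nonneg
  have hR2 : R * R = Sd := by rw [← pow_two]; exact CFC.sq_sqrt Sd hSdPSD.nonneg
  have hTH : Tᴴ = T := (Matrix.nonneg_iff_posSemidef.mp (CFC.sqrt_nonneg A)).1
  have hRH : Rᴴ = R := (Matrix.nonneg_iff_posSemidef.mp (CFC.sqrt_nonneg Sd)).1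
  have hEi : (R * S * R) * (R * S * R) = R * S * R := by
    have e : (R * S * R) * (R * S * R) = R * ((S * (R * R)) * S) * R := by noncomm_ring
    rw [e, hR2, h1]
  have hOneSubE : ((1 : Matrix (Fin n) (Fin n) ℂ) - R * S * R).PosSemidef := by
    have hEH : (R * S * R)ᴴ = R * S * R := by
      simp [Matrix.conjTranspose_mul, hRH, hSH, Matrix.mul_assoc]
    have e : (1 : Matrix (Fin n) (Fin n) ℂ) - R * S * R
        = ((1 : Matrix (Fin n) (Fin n) ℂ) - R * S * R)ᴴ * (1 - R * S * R) := by
      rw [Matrix.conjTranspose_sub, Matrix.conjTranspose_one, hEH]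
      have e2 : ((1 : Matrix (Fin n) (Fin n) ℂ) - R * S * R) * (1 - R * S * R)
          = 1 - R * S * R - R * S * R + (R * S * R) * (R * S * R) := by noncomm_ring
      rw [e2, hEi]
      abel
    rw [e]
    exact Matrix.posSemidef_conjTranspose_mul_self _
  have hRBR : (R * B * R).PosSemidef := by
    have := hB.mul_mul_conjTranspose_same R
    rwa [hRH] at this
  have hXXH : ((1 : Matrix (Fin n) (Fin n) ℂ) - (R * T) * (R * T)ᴴ).PosSemidef := by
    have e : (1 : Matrix (Fin n) (Fin n) ℂ) - (R * T) * (R * T)ᴴ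
        = ((1 : Matrix (Fin n) (Fin n) ℂ) - R * S * R) + R * B * R := by
      rw [Matrix.conjTranspose_mul, hRH, hTH]
      have e1 : R * T * (T * R) = R * A * R := by rw [← hT2]; noncomm_ring
      have e2 : R * S * R = R * A * R + R * B * R := by rw [hSdef]; noncomm_ring
      rw [e1, e2]
      abel
    rw [e]
    exact hOneSubE.add hRBR
  have hTSdT : ((1 : Matrix (Fin n) (Fin n) ℂ) - T * Sd * T).PosSemidef := by
    have e : (R * T)ᴴ * (R * T) = T * Sd * T := by
      rw [Matrix.conjTranspose_mul, hRH, hTH, ← hR2]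
      noncomm_ring
    have := one_sub_conj_psd hXXH
    rwa [e] at this
  have hMpsd : M.PosSemidef := by
    have hconj := hTSdT.mul_mul_conjTranspose_same T
    rw [hTH] at hconj
    have e : T * ((1 : Matrix (Fin n) (Fin n) ℂ) - T * Sd * T) * T = A - A * Sd * A := by
      rw [← hT2]; noncomm_ring
    rw [e, idA, sub_sub_cancel] at hconj
    exact hconj
  -- scalars
  have habpos : 0 < ‖A‖ + ‖B‖ := by
    rcases (add_nonneg (norm_nonneg A) (norm_nonneg B)).lt_or_eq with h | h
    · exact h
    · exfalso
      have hA0 : ‖A‖ = 0 := by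
        have := norm_nonneg A
        have := norm_nonneg B
        linarith
      have hB0 : ‖B‖ = 0 := by
        have := norm_nonneg A
        have := norm_nonneg B
        linarith
      rw [norm_eq_zero] at hA0 hB0
      exact hAB (by rw [hSdef, hA0, hB0, add_zero])
  set r : ℝ := ‖A‖ / (‖A‖ + ‖B‖) with hrdef
  set τ : ℂ := (r : ℂ) with hτdef
  set σ : ℂ := 1 - τ with hσdef
  set C := σ • A - τ • B with hC
  have hCH : Cᴴ = C := by
    have hsτ : star τ = τ := by
      rw [hτdef]; simp [Complex.star_def, Complex.conj_ofReal]
    have hsσ : star σ = σ := by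
      rw [hσdef]; simp [Complex.star_def, hsτ]
    rw [hC, Matrix.conjTranspose_sub, Matrix.conjTranspose_smul, Matrix.conjTranspose_smul,
      hAH, hBH, hsτ, hsσ]
  have hCSdC : (C * Sd * C).PosSemidef := by
    have := hSdPSD.mul_mul_conjTranspose_same C
    rwa [hCH] at this
  have expand : C * Sd * C = σ^2 • (A * Sd * A) - (σ*τ) • M - (τ*σ) • (B * Sd * A)
      + τ^2 • (B * Sd * B) := by
    rw [hC, hM]
    simp only [sub_mul, mul_sub, smul_mul_assoc, Matrix.mul_smul, smul_smul, smul_sub, sub_smul]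
    match_scalars <;> ring
  have key2 : C * Sd * C = σ^2 • A + τ^2 • B - M := by
    rw [expand, idA, hBSdA, idB]
    match_scalars <;> ring
  set c₀ : ℝ := (1-r)^2 * ‖A‖ + r^2 * ‖B‖ with hc₀def
  have keyfinal : ((c₀ : ℂ)) • (1 : Matrix (Fin n) (Fin n) ℂ) - M
      = (((1-r)^2 : ℝ) : ℂ) • ((‖A‖ : ℂ) • (1 : Matrix (Fin n) (Fin n) ℂ) - A)
        + ((r^2 : ℝ) : ℂ) • ((‖B‖ : ℂ) • (1 : Matrix (Fin n) (Fin n) ℂ) - B)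
        + C * Sd * C := by
    rw [key2, hc₀def]
    match_scalars <;> ring
  have hPSD : (((c₀ : ℂ)) • (1 : Matrix (Fin n) (Fin n) ℂ) - M).PosSemidef := by
    rw [keyfinal]
    exact ((psd_smul (psd_norm_sub hA) (sq_nonneg _)).add
      (psd_smul (psd_norm_sub hB) (sq_nonneg _))).add hCSdC
  have hc₀nonneg : 0 ≤ c₀ := by positivity
  have hnorm : ‖M‖ ≤ c₀ := norm_le_of_psd hMpsd hPSD hc₀nonneg
  have hc₀eq : c₀ = ‖A‖ * ‖B‖ / (‖A‖ + ‖B‖) := by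
    rw [hc₀def, hrdef]
    field_simp
    ring
  linarith
end

section
/- For Hermitian positive semi-definite matrices X and Y in C^{n×n}, the matrix X + Y − 4(X:Y) is positive semi-definite. -/
/-!
Write `S = X + Y` and `S⁺` for its Moore–Penrose inverse. Since `X, Y ≥ 0`, the projection
`1 - S S⁺`, which kills `S`, kills `X` as well; hence `S S⁺ X = X = X S⁺ S`. Then
`X S⁺ Y = X - X S⁺ X = Y S⁺ X`, and expanding gives `X + Y - 4 X S⁺ Y = (X - Y) S⁺ (X - Y)`,
which is positive semidefinite because `S⁺`, Hermitian by uniqueness of the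
Moore–Penrose inverse, equals `S⁺ᴴ S S⁺`.
-/

open scoped Matrix Matrix.Norms.L2Operator ComplexOrder

open scoped MatrixOrder

theorem mul_eq_zero_of_mul_add_eq_zero {A : Type*} [NonUnitalCStarAlgebra A] [PartialOrder A]
    [StarOrderedRing A] {a b q : A} (ha : 0 ≤ a) (hb : 0 ≤ b) (h : q * (a + b) = 0) :
    q * a = 0 := by
  have hqaq : q * a * star q = 0 := by
    refine ((add_eq_zero_iff_of_nonneg (star_right_conjugate_nonneg ha q)
      (star_right_conjugate_nonneg hb q)).1 ?_).1
    rw [← add_mul, ← mul_add, h, zero_mul]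
  obtain ⟨c, rfl⟩ := CStarAlgebra.nonneg_iff_eq_star_mul_self.mp ha
  have hcq : c * star q = 0 := by
    rw [← CStarRing.star_mul_self_eq_zero_iff, star_mul, star_star]
    simpa only [mul_assoc] using hqaq
  rw [← mul_assoc, ← star_star q, ← star_mul, hcq, star_zero, zero_mul]

theorem add_sub_four_smul_eq_sub_mul_mul_sub {K R : Type*} [CommRing K] [Ring R] [Algebra K R]
    {X Y B : R} (hS : (X + Y) * B * (X + Y) = X + Y) (hl : (X + Y) * B * X = X)
    (hr : X * B * (X + Y) = X) :
    X + Y - (4 : K) • (X * B * Y) = (X - Y) * B * (X - Y) := by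
  have hXY : X * B * Y = X * B * (X + Y) - X * B * X := by noncomm_ring
  have hexp : (X - Y) * B * (X - Y) = 4 * (X * B * X) - 2 * (X * B * (X + Y))
      - 2 * ((X + Y) * B * X) + (X + Y) * B * (X + Y) := by noncomm_ring
  rw [hexp, hXY, hS, hl, hr, ofNat_smul_eq_nsmul]
  noncomm_ring

namespace MPInv

variable {n : ℕ} {A B C X Y : Matrix (Fin n) (Fin n) ℂ}

theorem conjTranspose (h : MPInv A B) : MPInv Aᴴ Bᴴ := by
  obtain ⟨hABA, hBAB, hAB, hBA⟩ := h
  refine ⟨?_, ?_, ?_, ?_⟩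
  · rw [← Matrix.conjTranspose_mul, ← Matrix.conjTranspose_mul, ← Matrix.mul_assoc, hABA]
  · rw [← Matrix.conjTranspose_mul, ← Matrix.conjTranspose_mul, ← Matrix.mul_assoc, hBAB]
  · rw [← Matrix.conjTranspose_mul]; exact hBA.conjTranspose
  · rw [← Matrix.conjTranspose_mul]; exact hAB.conjTranspose

theorem unique (hB : MPInv A B) (hC : MPInv A C) : B = C := by
  obtain ⟨hABA, hBAB, hAB, hBA⟩ := hB
  obtain ⟨hACA, hCAC, hAC, hCA⟩ := hC
  have hABC : A * B = A * C := by
    calc A * B = (A * C) * (A * B) := by rw [← Matrix.mul_assoc, hACA]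
    _ = (A * C)ᴴ * (A * B)ᴴ := by rw [hAC.eq, hAB.eq]
    _ = (A * B * A * C)ᴴ := by simp only [Matrix.conjTranspose_mul, Matrix.mul_assoc]
    _ = A * C := by rw [hABA, hAC.eq]
  have hBCA : B * A = C * A := by
    calc B * A = (B * A) * (C * A) := by rw [Matrix.mul_assoc, ← Matrix.mul_assoc A C A, hACA]
    _ = (B * A)ᴴ * (C * A)ᴴ := by rw [hCA.eq, hBA.eq]
    _ = (C * (A * B * A))ᴴ := by simp only [Matrix.conjTranspose_mul, Matrix.mul_assoc]
    _ = C * A := by rw [hABA, hCA.eq]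
  calc B = B * A * B := hBAB.symm
  _ = C * A * C := by rw [Matrix.mul_assoc, hABC, ← Matrix.mul_assoc, hBCA]
  _ = C := hCAC

theorem isHermitian (hA : A.IsHermitian) (h : MPInv A B) : B.IsHermitian :=
  (hA.eq ▸ h.conjTranspose).unique h

theorem posSemidef (hA : A.PosSemidef) (h : MPInv A B) : B.PosSemidef := by
  simpa only [(h.isHermitian hA.isHermitian).eq, h.2.1] using hA.conjTranspose_mul_mul_same B

theorem add_mul_mul_left_eq (hX : X.PosSemidef) (hY : Y.PosSemidef) (h : MPInv (X + Y) B) :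
    (X + Y) * B * X = X := by
  have hQ : (1 - (X + Y) * B) * (X + Y) = 0 := by rw [Matrix.sub_mul, Matrix.one_mul, h.1, sub_self]
  have := mul_eq_zero_of_mul_add_eq_zero hX.nonneg hY.nonneg hQ
  rwa [Matrix.sub_mul, Matrix.one_mul, sub_eq_zero, eq_comm] at this

theorem left_mul_mul_add_eq (hX : X.PosSemidef) (hY : Y.PosSemidef) (h : MPInv (X + Y) B) :
    X * B * (X + Y) = X := by
  have hB := h.isHermitian (hX.add hY).isHermitian
  simpa only [Matrix.conjTranspose_mul, hX.isHermitian.eq, hB.eq, (hX.add hY).isHermitian.eq,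
    Matrix.mul_assoc] using congrArg Matrix.conjTranspose (h.add_mul_mul_left_eq hX hY)

end MPInv

/-- X + Y - 4(X:Y) is positive semidefinite. -/
theorem sub_four_parallel_sum_posSemidef {n : ℕ} (X Y Sd : Matrix (Fin n) (Fin n) ℂ)
    (hX : X.PosSemidef) (hY : Y.PosSemidef) (hSd : MPInv (X + Y) Sd) :
    (X + Y - (4 : ℂ) • (X * Sd * Y)).PosSemidef := by
  rw [add_sub_four_smul_eq_sub_mul_mul_sub hSd.1 (hSd.add_mul_mul_left_eq hX hY)
    (hSd.left_mul_mul_add_eq hX hY)]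
  simpa only [(hX.isHermitian.sub hY.isHermitian).eq] using
    (hSd.posSemidef (hX.add hY)).conjTranspose_mul_mul_same (X - Y)
end

section
/- For Hermitian positive semi-definite matrices X and Y, define W = ((X+Y)^†)^{1/2} [ (X+Y)/4 − X:Y ] ((X+Y)^†)^{1/2} and X∨Y = (X+Y)/2 + (X+Y)^{1/2} W^{1/2} (X+Y)^{1/2}. Then X∨Y ≥ X and X∨Y ≥ Y in the Loewner order. -/
open scoped Matrix Matrix.Norms.L2Operator ComplexOrder

/-- The positive semidefinite square root of a positive semidefinite matrix
(the definition `Matrix.PosSemidef.sqrt` of Mathlib, December 2024, since removed). -/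
noncomputable def Matrix.PosSemidef.sqrt {n 𝕜 : Type*} [Fintype n] [RCLike 𝕜] [DecidableEq n]
    {A : Matrix n n 𝕜} (hA : A.PosSemidef) : Matrix n n 𝕜 :=
  hA.1.eigenvectorUnitary.1 * Matrix.diagonal ((↑) ∘ (√·) ∘ hA.1.eigenvalues) *
    (star hA.1.eigenvectorUnitary : Matrix n n 𝕜)

/-! Since `X` and `Y` lie in the range of `S = X + Y`, i.e. `S S^† X = X` and `S S^† Y = Y`, one gets
`X:Y = Y:X` and `S/4 − X:Y = (X − Y) S^† (X − Y)/4`. Hence `W = B²` for the self-adjoint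
`B = (S^†)^{1/2} (X − Y) (S^†)^{1/2} / 2`, so `W^{1/2} = |B|` and `−W^{1/2} ≤ B ≤ W^{1/2}`.
Conjugating by `S^{1/2}`, and using `S^{1/2} (S^†)^{1/2} = S S^†`, turns `B` into `(X − Y)/2`, so
`X = S/2 + S^{1/2} B S^{1/2} ≤ X∨Y` and `Y = S/2 − S^{1/2} B S^{1/2} ≤ X∨Y`. -/

section CStarAlgebra

variable {A : Type*} [CStarAlgebra A] [PartialOrder A] [StarOrderedRing A]

lemma IsSelfAdjoint.neg_le_and_le_of_mul_self_eq {b w : A} (hb : IsSelfAdjoint b) (hw : 0 ≤ w)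
    (h : w * w = b * b) : -w ≤ b ∧ b ≤ w := by
  have hw_abs : w = CFC.abs b := by
    rw [CFC.abs, hb.star_eq, ← h, CFC.sqrt_mul_self w]
  subst hw_abs
  constructor
  · rw [← sub_nonneg, sub_neg_eq_add, add_comm, CFC.abs_add_self b]
    exact nsmul_nonneg (CFC.posPart_nonneg b) 2
  · rw [← sub_nonneg, CFC.abs_sub_self b]
    exact nsmul_nonneg (CFC.negPart_nonneg b) 2

lemma mul_eq_zero_of_mul_mul_star_eq_zero {c x : A} (hx : 0 ≤ x) (h : c * x * star c = 0) :
    c * x = 0 := by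
  obtain ⟨r, rfl⟩ := CStarAlgebra.nonneg_iff_eq_star_mul_self.1 hx
  have hr : r * star c = 0 := by
    rw [← CStarRing.star_mul_self_eq_zero_iff, ← h]
    simp only [star_mul, star_star, mul_assoc]
  rw [← mul_assoc, show c * star r = star (r * star c) by simp, hr, star_zero, zero_mul]

lemma mul_eq_zero_of_le_of_mul_mul_star_eq_zero {c x s : A} (hx : 0 ≤ x) (hxs : x ≤ s)
    (h : c * s * star c = 0) : c * x = 0 := by
  refine mul_eq_zero_of_mul_mul_star_eq_zero hx (le_antisymm ?_ (star_right_conjugate_nonneg hx c))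
  exact h ▸ star_right_conjugate_le_conjugate hxs c

lemma mul_mul_eq_self_of_le {g x s : A} (hx : 0 ≤ x) (hxs : x ≤ s) (hg : s * g * s = s) :
    s * g * x = x := by
  have hc : (1 - s * g) * s = 0 := by rw [sub_mul, one_mul, hg, sub_self]
  have := mul_eq_zero_of_le_of_mul_mul_star_eq_zero hx hxs (c := 1 - s * g) (by rw [hc, zero_mul])
  rwa [sub_mul, one_mul, sub_eq_zero, eq_comm] at this

lemma mul_mul_eq_self_of_le' {g x s : A} (hx : 0 ≤ x) (hxs : x ≤ s) (hg_sa : IsSelfAdjoint g)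
    (hg : s * g * s = s) : x * g * s = x := by
  have hs : 0 ≤ s := hx.trans hxs
  simpa [mul_assoc, hx.star_eq, hg_sa.star_eq, hs.star_eq] using
    congrArg star (mul_mul_eq_self_of_le hx hxs hg)

lemma quarter_smul_add_sub_mul_mul_eq {g x y : A} (hg : (x + y) * g * (x + y) = x + y)
    (hxl : x * g * (x + y) = x) (hxr : (x + y) * g * x = x) :
    (4 : ℂ)⁻¹ • (x + y) - x * g * y = (4 : ℂ)⁻¹ • ((x - y) * g * (x - y)) := by
  have hsymm : y * g * x = x * g * y := by
    rw [mul_add] at hxl; rw [add_mul, add_mul] at hxr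
    exact add_left_cancel (hxr.trans hxl.symm)
  have expand : (x - y) * g * (x - y) = (x + y) * g * (x + y) - 2 • (x * g * y + y * g * x) := by
    noncomm_ring
  rw [expand, hg, hsymm]
  module

/-- Both sides are nonnegative square roots of the projection `s * g`. -/
lemma CFC.sqrt_mul_eq_of_mul_mul_eq_self {s g h : A} (hs : 0 ≤ s) (hh : 0 ≤ h) (hhg : h * h = g)
    (hcomm : Commute s g) (hg : s * g * s = s) :
    CFC.sqrt s * h = s * g := by
  subst hhg
  have hsh : Commute (CFC.sqrt s) h := by
    have : Commute (CFC.sqrt s) (h * h) := by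
      rw [CFC.sqrt_eq_cfc]; exact hcomm.cfc_nnreal _
    rw [← CFC.sqrt_mul_self h, CFC.sqrt_eq_cfc (a := h * h)]
    exact (this.symm.cfc_nnreal _).symm
  refine (CFC.mul_self_eq_mul_self_iff _ _ (hsh.mul_nonneg (CFC.sqrt_nonneg s) hh)
    (hcomm.mul_nonneg hs ((Commute.refl h).mul_nonneg hh hh))).1 ?_
  calc CFC.sqrt s * h * (CFC.sqrt s * h) = CFC.sqrt s * CFC.sqrt s * (h * h) := by
        rw [hsh.mul_mul_mul_comm]
    _ = s * (h * h) := by rw [CFC.sqrt_mul_sqrt_self s]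
    _ = s * (h * h) * (s * (h * h)) := by rw [← mul_assoc _ s, hg]

theorem le_and_le_smul_add_add_sqrt_mul_mul_sqrt {x y g h w : A} (hx : 0 ≤ x) (hy : 0 ≤ y)
    (hg : (x + y) * g * (x + y) = x + y) (hgs : IsSelfAdjoint ((x + y) * g))
    (hh : 0 ≤ h) (hhg : h * h = g) (hw : 0 ≤ w)
    (hw2 : w * w = h * ((4 : ℂ)⁻¹ • (x + y) - x * g * y) * h) :
    x ≤ (2 : ℂ)⁻¹ • (x + y) + CFC.sqrt (x + y) * w * CFC.sqrt (x + y) ∧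
      y ≤ (2 : ℂ)⁻¹ • (x + y) + CFC.sqrt (x + y) * w * CFC.sqrt (x + y) := by
  set s := x + y
  set r := CFC.sqrt s
  have hs : 0 ≤ s := add_nonneg hx hy
  have hg_sa : IsSelfAdjoint g := hhg ▸ ((Commute.refl h).mul_nonneg hh hh).isSelfAdjoint
  have hcomm : Commute s g := (hs.isSelfAdjoint.commute_iff hg_sa).2 hgs
  have hxr : s * g * x = x := mul_mul_eq_self_of_le hx (le_add_of_nonneg_right hy) hg
  have hyr : s * g * y = y := mul_mul_eq_self_of_le hy (le_add_of_nonneg_left hx) hg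
  have hxl : x * g * s = x := mul_mul_eq_self_of_le' hx (le_add_of_nonneg_right hy) hg_sa hg
  have hyl : y * g * s = y := mul_mul_eq_self_of_le' hy (le_add_of_nonneg_left hx) hg_sa hg
  have hr : IsSelfAdjoint r := (CFC.sqrt_nonneg s).isSelfAdjoint
  have hrh : r * h = s * g := CFC.sqrt_mul_eq_of_mul_mul_eq_self hs hh hhg hcomm hg
  have hhr : h * r = g * s := by
    simpa [hh.star_eq, hr.star_eq, hg_sa.star_eq, hs.star_eq] using congrArg star hrh
  set b := (2 : ℂ)⁻¹ • (h * (x - y) * h)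
  have hb : IsSelfAdjoint b :=
    IsSelfAdjoint.smul (by simp [isSelfAdjoint_iff])
      ((hx.isSelfAdjoint.sub hy.isSelfAdjoint).conjugate_self hh.isSelfAdjoint)
  have hbb : w * w = b * b := by
    rw [hw2, quarter_smul_add_sub_mul_mul_eq hg hxl hxr, ← hhg]
    simp only [b, mul_smul_comm, smul_mul_assoc, mul_assoc, smul_smul]
    norm_num
  have hrbr : r * b * r = (2 : ℂ)⁻¹ • (x - y) := by
    have : r * (h * (x - y) * h) * r = x - y := calc
      _ = (r * h) * (x - y) * (h * r) := by simp only [mul_assoc]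
      _ = (s * g * x - s * g * y) * g * s := by rw [hrh, hhr]; noncomm_ring
      _ = x - y := by rw [hxr, hyr, sub_mul, sub_mul, hxl, hyl]
    simp only [b, mul_smul_comm, smul_mul_assoc, this]
  obtain ⟨hwb, hbw⟩ := hb.neg_le_and_le_of_mul_self_eq hw hbb
  constructor
  · calc x = (2 : ℂ)⁻¹ • s + r * b * r := by rw [hrbr]; module
      _ ≤ (2 : ℂ)⁻¹ • s + r * w * r := by gcongr; exact hr.conjugate_le_conjugate hbw
  · have hneg := hr.conjugate_le_conjugate hwb
    rw [mul_neg, neg_mul] at hneg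
    calc y = (2 : ℂ)⁻¹ • s + -(r * b * r) := by rw [hrbr]; module
      _ ≤ (2 : ℂ)⁻¹ • s + r * w * r := by gcongr; exact neg_le.mp hneg

end CStarAlgebra

open scoped MatrixOrder

lemma Matrix.PosSemidef.sqrt_eq_cfcSqrt {n 𝕜 : Type*} [Fintype n] [RCLike 𝕜] [DecidableEq n]
    {A : Matrix n n 𝕜} (hA : A.PosSemidef) : hA.sqrt = CFC.sqrt A := by
  rw [CFC.sqrt_eq_real_sqrt A hA.nonneg, cfcₙ_eq_cfc, hA.1.cfc_eq]
  rfl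

/-- X∨Y is a common upper bound of X and Y in the Loewner order. -/
theorem sup_is_common_upper_bound {n : ℕ} (X Y Sd Sdh Wh : Matrix (Fin n) (Fin n) ℂ)
    (hX : X.PosSemidef) (hY : Y.PosSemidef) (hSd : MPInv (X + Y) Sd)
    (hSdh : Sdh.PosSemidef) (hSdh2 : Sdh * Sdh = Sd)
    (hWh : Wh.PosSemidef)
    (hWh2 : Wh * Wh = Sdh * ((4 : ℂ)⁻¹ • (X + Y) - X * Sd * Y) * Sdh) :
    ((2 : ℂ)⁻¹ • (X + Y) + (hX.add hY).sqrt * Wh * (hX.add hY).sqrt - X).PosSemidef ∧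
    ((2 : ℂ)⁻¹ • (X + Y) + (hX.add hY).sqrt * Wh * (hX.add hY).sqrt - Y).PosSemidef := by
  obtain ⟨hSdS, -, hSSd, -⟩ := hSd
  rw [(hX.add hY).sqrt_eq_cfcSqrt, ← Matrix.le_iff, ← Matrix.le_iff]
  exact le_and_le_smul_add_add_sqrt_mul_mul_sqrt hX.nonneg hY.nonneg hSdS hSSd hSdh.nonneg hSdh2
    hWh.nonneg hWh2
end

section
/- If P and Q are orthogonal projections in C^{n×n}, then P:Q = (1/2)P₀, where P₀ is the orthogonal projection onto R(P) ∩ R(Q). -/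
open scoped Matrix Matrix.Norms.L2Operator ComplexOrder MatrixOrder

/-!
With `S = P + Q`, the Moore-Penrose inverse `S†` is self-adjoint and commutes with `S`, and
`P S† S = P`: the defect `C = 1 - S† S` satisfies `S C = 0`, so `(PC)ᴴ(PC) + (QC)ᴴ(QC) = Cᴴ S C = 0`
forces `PC = 0` by positivity. Hence `T = P S† Q = P - P S† P = Q S† P` is self-adjoint with range
in `R(P) ∩ R(Q)`, so `T = P₀ T`, while `S P₀ = 2 P₀` gives `2 T P₀ = P S† S P₀ = P₀`.
Therefore `2 T = 2 P₀ T = (2 T P₀)ᴴ = P₀`.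
-/

structure IsMoorePenroseInverse {R : Type*} [Mul R] [Star R] (a b : R) : Prop where
  mul_mul_left : a * b * a = a
  mul_mul_right : b * a * b = b
  isSelfAdjoint_mul_left : IsSelfAdjoint (a * b)
  isSelfAdjoint_mul_right : IsSelfAdjoint (b * a)

namespace IsMoorePenroseInverse

variable {R : Type*} [Semigroup R] [StarMul R] {a b c : R}

theorem unique (hb : IsMoorePenroseInverse a b) (hc : IsMoorePenroseInverse a c) : b = c := by
  have hab : a * b = a * c := calc
    a * b = a * c * (a * b) := by rw [← mul_assoc, hc.mul_mul_left]
    _ = star (a * c) * star (a * b) := by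
      rw [hc.isSelfAdjoint_mul_left.star_eq, hb.isSelfAdjoint_mul_left.star_eq]
    _ = star (a * b * (a * c)) := (star_mul _ _).symm
    _ = a * c := by rw [← mul_assoc, hb.mul_mul_left, hc.isSelfAdjoint_mul_left.star_eq]
  have hba : b * a = c * a := calc
    b * a = b * a * (c * a) := by rw [mul_assoc b a, ← mul_assoc a c a, hc.mul_mul_left]
    _ = star (b * a) * star (c * a) := by
      rw [hc.isSelfAdjoint_mul_right.star_eq, hb.isSelfAdjoint_mul_right.star_eq]
    _ = star (c * a * (b * a)) := (star_mul _ _).symm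
    _ = c * a := by
      rw [mul_assoc c a, ← mul_assoc a b a, hb.mul_mul_left, hc.isSelfAdjoint_mul_right.star_eq]
  calc b = b * a * b := hb.mul_mul_right.symm
    _ = c * a * c := by rw [mul_assoc, hab, ← mul_assoc, hba]
    _ = c := hc.mul_mul_right

theorem star (h : IsMoorePenroseInverse a b) : IsMoorePenroseInverse (star a) (star b) where
  mul_mul_left := by rw [← star_mul, ← star_mul, ← mul_assoc, h.mul_mul_left]
  mul_mul_right := by rw [← star_mul, ← star_mul, ← mul_assoc, h.mul_mul_right]
  isSelfAdjoint_mul_left := by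
    rw [← star_mul]; exact IsSelfAdjoint.star_iff.mpr h.isSelfAdjoint_mul_right
  isSelfAdjoint_mul_right := by
    rw [← star_mul]; exact IsSelfAdjoint.star_iff.mpr h.isSelfAdjoint_mul_left

theorem isSelfAdjoint (h : IsMoorePenroseInverse a b) (ha : IsSelfAdjoint a) :
    IsSelfAdjoint b :=
  (h.unique (ha.star_eq ▸ h.star)).symm

theorem commute (h : IsMoorePenroseInverse a b) (ha : IsSelfAdjoint a) : Commute a b := by
  have := h.isSelfAdjoint_mul_left.star_eq
  rwa [star_mul, (h.isSelfAdjoint ha).star_eq, ha.star_eq, eq_comm] at this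

end IsMoorePenroseInverse

theorem IsStarProjection.mul_eq_zero_of_add_mul_eq_zero {R : Type*} [NonUnitalNormedRing R]
    [StarRing R] [CStarRing R] [PartialOrder R] [StarOrderedRing R] {p q c : R}
    (hp : IsStarProjection p) (hq : IsStarProjection q) (h : (p + q) * c = 0) : p * c = 0 := by
  have star_mul_self_eq {r : R} (hr : IsStarProjection r) :
      star (r * c) * (r * c) = star c * (r * c) := by
    rw [star_mul, hr.isSelfAdjoint.star_eq, mul_assoc, ← mul_assoc r r c,
      hr.isIdempotentElem.eq]
  have hsum : star (p * c) * (p * c) + star (q * c) * (q * c) = 0 := by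
    rw [star_mul_self_eq hp, star_mul_self_eq hq, ← mul_add, ← add_mul, h, mul_zero]
  rw [← CStarRing.star_mul_self_eq_zero_iff]
  exact ((add_eq_zero_iff_of_nonneg (star_mul_self_nonneg _) (star_mul_self_nonneg _)).1 hsum).1

namespace IsMoorePenroseInverse

variable {R : Type*} [NormedRing R] [StarRing R] [CStarRing R] [PartialOrder R]
  [StarOrderedRing R] {p q b : R}

theorem mul_mul_add_eq_left (hp : IsStarProjection p) (hq : IsStarProjection q)
    (h : IsMoorePenroseInverse (p + q) b) : p * (b * (p + q)) = p := by
  have hker : (p + q) * (1 - b * (p + q)) = 0 := by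
    rw [mul_sub, mul_one, ← mul_assoc, h.mul_mul_left, sub_self]
  have := hp.mul_eq_zero_of_add_mul_eq_zero hq hker
  rwa [mul_sub, mul_one, sub_eq_zero, eq_comm] at this

theorem mul_mul_comm (hp : IsStarProjection p) (hq : IsStarProjection q)
    (h : IsMoorePenroseInverse (p + q) b) : p * b * q = q * b * p := by
  have hpbs : p * b * p + p * b * q = p := by
    rw [← mul_add, mul_assoc, h.mul_mul_add_eq_left hp hq]
  have hsbp : p * b * p + q * b * p = p := by
    have hbsp : b * (p + q) * p = p := by
      simpa only [star_mul, hp.isSelfAdjoint.star_eq, h.isSelfAdjoint_mul_right.star_eq]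
        using congrArg Star.star (h.mul_mul_add_eq_left hp hq)
    rw [← add_mul, ← add_mul, (h.commute (hp.isSelfAdjoint.add hq.isSelfAdjoint)).eq, hbsp]
  exact add_left_cancel (hpbs.trans hsbp.symm)

theorem isSelfAdjoint_mul_mul (hp : IsStarProjection p) (hq : IsStarProjection q)
    (h : IsMoorePenroseInverse (p + q) b) : IsSelfAdjoint (p * b * q) := by
  rw [IsSelfAdjoint, star_mul, star_mul, hp.isSelfAdjoint.star_eq, hq.isSelfAdjoint.star_eq,
    (h.isSelfAdjoint (hp.isSelfAdjoint.add hq.isSelfAdjoint)).star_eq, ← mul_assoc,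
    h.mul_mul_comm hp hq]

theorem two_nsmul_mul_mul_eq {p₀ : R} (hp : IsStarProjection p) (hq : IsStarProjection q)
    (h : IsMoorePenroseInverse (p + q) b) (hp₀ : IsSelfAdjoint p₀) (hpp₀ : p * p₀ = p₀)
    (hqp₀ : q * p₀ = p₀) (hp₀T : p₀ * (p * b * q) = p * b * q) : 2 • (p * b * q) = p₀ := by
  have hTp₀ : 2 • (p * b * q) * p₀ = p₀ := calc
    2 • (p * b * q) * p₀ = p * b * (q * p₀) + p * b * (q * p₀) := by
      rw [two_nsmul, add_mul, mul_assoc (p * b)]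
    _ = p * b * (p * p₀ + q * p₀) := by rw [hpp₀, hqp₀, mul_add]
    _ = p * (b * (p + q)) * p₀ := by simp only [mul_assoc, add_mul]
    _ = p₀ := by rw [h.mul_mul_add_eq_left hp hq, hpp₀]
  calc 2 • (p * b * q) = p₀ * 2 • (p * b * q) := by rw [mul_smul_comm, hp₀T]
    _ = Star.star (2 • (p * b * q) * p₀) := by
      rw [star_mul, star_nsmul, (h.isSelfAdjoint_mul_mul hp hq).star_eq, hp₀.star_eq]
    _ = p₀ := by rw [hTp₀, hp₀.star_eq]

end IsMoorePenroseInverse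

namespace Matrix

variable {n R : Type*} [Fintype n] [CommSemiring R]

theorem range_mulVecLin_mul_le (A B : Matrix n n R) :
    LinearMap.range (A * B).mulVecLin ≤ LinearMap.range A.mulVecLin := by
  rw [mulVecLin_mul]
  exact LinearMap.range_comp_le_range _ _

theorem mul_eq_right_of_range_mulVecLin_le [DecidableEq n] {F A : Matrix n n R} (hF : IsIdempotentElem F)
    (h : LinearMap.range A.mulVecLin ≤ LinearMap.range F.mulVecLin) : F * A = A := by
  have hFlin : IsIdempotentElem F.mulVecLin := by
    rw [IsIdempotentElem, Module.End.mul_eq_comp, ← mulVecLin_mul, hF.eq]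
  apply toLin'.injective
  rw [toLin'_apply', toLin'_apply', mulVecLin_mul]
  exact (LinearMap.IsIdempotentElem.comp_eq_right_iff hFlin _).2 h

end Matrix

/-- For orthogonal projections P and Q, P:Q = (1/2)P₀ where P₀ projects onto R(P) ∩ R(Q). -/
theorem parallel_sum_projections {n : ℕ} (P Q Sd P₀ : Matrix (Fin n) (Fin n) ℂ)
    (hP : P.IsHermitian) (hP2 : P * P = P)
    (hQ : Q.IsHermitian) (hQ2 : Q * Q = Q)
    (hSd : MPInv (P + Q) Sd)
    (hP₀ : P₀.IsHermitian) (hP₀2 : P₀ * P₀ = P₀)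
    (hP₀range : LinearMap.range P₀.mulVecLin
      = LinearMap.range P.mulVecLin ⊓ LinearMap.range Q.mulVecLin) :
    P * Sd * Q = (2 : ℂ)⁻¹ • P₀ := by
  have hPproj : IsStarProjection P := ⟨hP2, hP⟩
  have hQproj : IsStarProjection Q := ⟨hQ2, hQ⟩
  have hMP : IsMoorePenroseInverse (P + Q) Sd := ⟨hSd.1, hSd.2.1, hSd.2.2.1, hSd.2.2.2⟩
  have hPP₀ : P * P₀ = P₀ :=
    Matrix.mul_eq_right_of_range_mulVecLin_le hP2 (hP₀range ▸ inf_le_left)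
  have hQP₀ : Q * P₀ = P₀ :=
    Matrix.mul_eq_right_of_range_mulVecLin_le hQ2 (hP₀range ▸ inf_le_right)
  have hP₀T : P₀ * (P * Sd * Q) = P * Sd * Q := by
    refine Matrix.mul_eq_right_of_range_mulVecLin_le hP₀2 (hP₀range ▸ le_inf ?_ ?_)
    · rw [mul_assoc]
      exact Matrix.range_mulVecLin_mul_le _ _
    · rw [hMP.mul_mul_comm hPproj hQproj, mul_assoc]
      exact Matrix.range_mulVecLin_mul_le _ _
  rw [eq_inv_smul_iff₀ two_ne_zero, two_smul, ← two_nsmul]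
  exact hMP.two_nsmul_mul_mul_eq hPproj hQproj hP₀ hPP₀ hQP₀ hP₀T
end

section
/- For orthogonal projections P and Q in C^{n×n}, ‖P∨Q‖ = max{‖P‖, ‖Q‖} if and only if PQ = QP. -/
open scoped Matrix Matrix.Norms.L2Operator ComplexOrder
open scoped InnerProductSpace

namespace SupProjAux

variable {n : ℕ}

local notation "T" => Matrix.toEuclideanCLM (𝕜 := ℂ) (n := Fin n)

lemma coe_fix : ((RCLike.ofReal : ℝ → ℂ)) = Complex.ofReal := rfl

lemma self_adj {A : Matrix (Fin n) (Fin n) ℂ} (hA : A.IsHermitian) :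
    ContinuousLinearMap.adjoint (T A) = T A := by
  rw [← ContinuousLinearMap.star_eq_adjoint, ← map_star, Matrix.star_eq_conjTranspose, hA.eq]

lemma inner_apply_self {A : Matrix (Fin n) (Fin n) ℂ} (hA : A.IsHermitian)
    (hA2 : A * A = A) (z : EuclideanSpace ℂ (Fin n)) :
    ⟪z, (T A) z⟫_ℂ = (‖(T A) z‖ : ℂ) ^ 2 := by
  have h1 : (T A) ((T A) z) = (T A) z := by
    rw [← ContinuousLinearMap.mul_apply, ← map_mul, hA2]
  calc ⟪z, (T A) z⟫_ℂ = ⟪z, (T A) ((T A) z)⟫_ℂ := by rw [h1]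
    _ = ⟪ContinuousLinearMap.adjoint (T A) z, (T A) z⟫_ℂ := by
        rw [ContinuousLinearMap.adjoint_inner_left]
    _ = ⟪(T A) z, (T A) z⟫_ℂ := by rw [self_adj hA]
    _ = (‖(T A) z‖ : ℂ) ^ 2 := inner_self_eq_norm_sq_to_K _

lemma comm_of_norm_le (P Q P₀ : Matrix (Fin n) (Fin n) ℂ)
    (hP2 : P * P = P)
    (hQ : Q.IsHermitian) (hQ2 : Q * Q = Q)
    (hP₀ : P₀.IsHermitian) (hP₀2 : P₀ * P₀ = P₀)
    (hP₀P : P₀ * P = P₀) (hP₀Q : P₀ * Q = P₀)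
    (hnorm : ‖P + Q - P₀‖ ≤ 1) : Q * P = P₀ := by
  set E := EuclideanSpace ℂ (Fin n)
  have hTM : ∀ x : E, ‖(T (P + Q - P₀)) x‖ ≤ ‖x‖ := by
    intro x
    calc ‖(T (P + Q - P₀)) x‖ ≤ ‖T (P + Q - P₀)‖ * ‖x‖ :=
          ContinuousLinearMap.le_opNorm _ _
      _ ≤ 1 * ‖x‖ := by
          refine mul_le_mul_of_nonneg_right ?_ (norm_nonneg _)
          rw [← Matrix.cstar_norm_def]; exact hnorm
      _ = ‖x‖ := one_mul _
  -- contraction property of p₀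
  have hp₀contr : ∀ z : E, ‖(T P₀) z‖ ≤ ‖z‖ := by
    intro z
    have h1 : (‖(T P₀) z‖ : ℝ) ^ 2 = RCLike.re ⟪z, (T P₀) z⟫_ℂ := by
      rw [inner_apply_self hP₀ hP₀2]
      simp only [coe_fix, ← Complex.ofReal_pow, RCLike.re_to_complex, Complex.ofReal_re]
    have h2 : RCLike.re ⟪z, (T P₀) z⟫_ℂ ≤ ‖z‖ * ‖(T P₀) z‖ := by
      refine le_trans ?_ (norm_inner_le_norm (𝕜 := ℂ) _ _)
      exact RCLike.re_le_norm _
    rcases eq_or_lt_of_le (norm_nonneg ((T P₀) z)) with h | h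
    · rw [← h]; exact norm_nonneg z
    · nlinarith
  -- main pointwise identity
  have key : ∀ x : E, (T Q) ((T P) x) = (T P₀) ((T P) x) := by
    intro x
    set y := (T P) x with hy
    have hpy : (T P) y = y := by
      rw [hy, ← ContinuousLinearMap.mul_apply, ← map_mul, hP2]
    have hp₀q : ∀ z : E, (T P₀) ((T Q) z) = (T P₀) z := by
      intro z
      rw [← ContinuousLinearMap.mul_apply, ← map_mul, hP₀Q]
    -- the quadratic-form inequality
    have hsplit : ⟪y, (T (P + Q - P₀)) y⟫_ℂ
        = (‖y‖ : ℂ) ^ 2 + (‖(T Q) y‖ : ℂ) ^ 2 - (‖(T P₀) y‖ : ℂ) ^ 2 := by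
      rw [map_sub, map_add]
      simp only [ContinuousLinearMap.sub_apply, ContinuousLinearMap.add_apply]
      rw [inner_sub_right, inner_add_right, inner_apply_self hQ hQ2,
        inner_apply_self hP₀ hP₀2, hpy, inner_self_eq_norm_sq_to_K]
      simp only [coe_fix]
    have hineq : ‖(T Q) y‖ ^ 2 ≤ ‖(T P₀) y‖ ^ 2 := by
      have h1 : RCLike.re ⟪y, (T (P + Q - P₀)) y⟫_ℂ ≤ ‖y‖ ^ 2 := by
        calc RCLike.re ⟪y, (T (P + Q - P₀)) y⟫_ℂ ≤ ‖⟪y, (T (P + Q - P₀)) y⟫_ℂ‖ :=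
              RCLike.re_le_norm _
          _ ≤ ‖y‖ * ‖(T (P + Q - P₀)) y‖ := norm_inner_le_norm (𝕜 := ℂ) _ _
          _ ≤ ‖y‖ * ‖y‖ := mul_le_mul_of_nonneg_left (hTM y) (norm_nonneg _)
          _ = ‖y‖ ^ 2 := (sq ‖y‖).symm
      rw [hsplit] at h1
      simp only [← Complex.ofReal_pow, ← Complex.ofReal_add, ← Complex.ofReal_sub,
        Complex.ofReal_re, RCLike.re_to_complex] at h1
      linarith
    have hle : ‖(T P₀) y‖ ≤ ‖(T Q) y‖ := by
      rw [← hp₀q y]; exact hp₀contr _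
    have heq : ‖(T Q) y‖ = ‖(T P₀) y‖ := by nlinarith [norm_nonneg ((T Q) y), norm_nonneg ((T P₀) y)]
    -- conclude Q y = P₀ y
    have hinner : ⟪(T Q) y, (T P₀) y⟫_ℂ = (‖(T P₀) y‖ : ℂ) ^ 2 := by
      rw [← hp₀q y, inner_apply_self hP₀ hP₀2, hp₀q y]
    have hzero : ‖(T Q) y - (T P₀) y‖ ^ 2 = 0 := by
      rw [@norm_sub_sq ℂ, hinner, heq]
      simp only [coe_fix, ← Complex.ofReal_pow, RCLike.re_to_complex, Complex.ofReal_re]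
      ring
    have := pow_eq_zero_iff (n := 2) (by norm_num) |>.mp hzero
    rw [norm_eq_zero, sub_eq_zero] at this
    exact this
  -- convert to matrix equality
  have : T (Q * P) = T P₀ := by
    apply ContinuousLinearMap.ext
    intro x
    rw [map_mul, ContinuousLinearMap.mul_apply, key x, ← ContinuousLinearMap.mul_apply,
      ← map_mul, hP₀P]
  exact Matrix.toEuclideanCLM.injective this

end SupProjAux

lemma eq_of_mulVec_eq {A B : Matrix (Fin n) (Fin n) ℂ}
    (h : ∀ x, A *ᵥ x = B *ᵥ x) : A = B := by
  apply Matrix.toLin'.injective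
  exact LinearMap.ext fun x => by simp [Matrix.toLin'_apply, h]

lemma mulVec_fix {A : Matrix (Fin n) (Fin n) ℂ} (hA : A * A = A) {z : Fin n → ℂ}
    (hz : z ∈ LinearMap.range A.mulVecLin) : A *ᵥ z = z := by
  obtain ⟨w, rfl⟩ := hz
  simp only [Matrix.mulVecLin_apply, Matrix.mulVec_mulVec, hA]

lemma mul_eq_of_range_le {A B : Matrix (Fin n) (Fin n) ℂ} (hA : A * A = A)
    (h : LinearMap.range B.mulVecLin ≤ LinearMap.range A.mulVecLin) : A * B = B := by
  apply eq_of_mulVec_eq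
  intro x
  rw [← Matrix.mulVec_mulVec]
  exact mulVec_fix hA (h ⟨x, rfl⟩)

lemma norm_one_of_proj {A : Matrix (Fin n) (Fin n) ℂ} (hA : A.IsHermitian)
    (h2 : A * A = A) (hne : A ≠ 0) : ‖A‖ = 1 := by
  have h := Matrix.l2_opNorm_conjTranspose_mul_self A
  rw [hA.eq, h2] at h
  have hn : ‖A‖ ≠ 0 := norm_ne_zero_iff.mpr hne
  have : ‖A‖ * 1 = ‖A‖ * ‖A‖ := by rw [mul_one]; exact h
  exact (mul_left_cancel₀ hn this).symm

open SupProjAux in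
/-- For nonzero orthogonal projections, ‖P∨Q‖ = max ‖P‖ ‖Q‖ iff PQ = QP. -/
theorem sup_projections_norm_iff_commute {n : ℕ} (P Q P₀ : Matrix (Fin n) (Fin n) ℂ)
    (hP : P.IsHermitian) (hP2 : P * P = P) (hPne : P ≠ 0)
    (hQ : Q.IsHermitian) (hQ2 : Q * Q = Q) (hQne : Q ≠ 0)
    (hP₀ : P₀.IsHermitian) (hP₀2 : P₀ * P₀ = P₀)
    (hP₀range : LinearMap.range P₀.mulVecLin
      = LinearMap.range P.mulVecLin ⊓ LinearMap.range Q.mulVecLin) :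
    ‖P + Q - P₀‖ = max ‖P‖ ‖Q‖ ↔ P * Q = Q * P := by
  have hmax : max ‖P‖ ‖Q‖ = 1 := by
    rw [norm_one_of_proj hP hP2 hPne, norm_one_of_proj hQ hQ2 hQne, max_self]
  have hrP : LinearMap.range P₀.mulVecLin ≤ LinearMap.range P.mulVecLin :=
    hP₀range ▸ inf_le_left
  have hrQ : LinearMap.range P₀.mulVecLin ≤ LinearMap.range Q.mulVecLin :=
    hP₀range ▸ inf_le_right
  have hPP₀ : P * P₀ = P₀ := mul_eq_of_range_le hP2 hrP
  have hQP₀ : Q * P₀ = P₀ := mul_eq_of_range_le hQ2 hrQ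
  have hP₀P : P₀ * P = P₀ := by
    have := congrArg Matrix.conjTranspose hPP₀
    rwa [Matrix.conjTranspose_mul, hP.eq, hP₀.eq] at this
  have hP₀Q : P₀ * Q = P₀ := by
    have := congrArg Matrix.conjTranspose hQP₀
    rwa [Matrix.conjTranspose_mul, hQ.eq, hP₀.eq] at this
  constructor
  · intro h
    have h' : ‖P + Q - P₀‖ ≤ 1 := le_of_eq (h.trans hmax)
    have h1 : Q * P = P₀ := comm_of_norm_le P Q P₀ hP2 hQ hQ2 hP₀ hP₀2 hP₀P hP₀Q h'
    have h2 : P * Q = P₀ := comm_of_norm_le Q P P₀ hQ2 hP hP2 hP₀ hP₀2 hP₀Q hP₀P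
      (by rwa [add_comm Q P])
    rw [h1, h2]
  · intro hc
    -- P*Q is a hermitian idempotent with the same range as P₀, hence equal to it
    have hA2 : (P * Q) * (P * Q) = P * Q := by
      calc (P * Q) * (P * Q) = P * ((Q * P) * Q) := by noncomm_ring
        _ = P * ((P * Q) * Q) := by rw [hc]
        _ = (P * P) * (Q * Q) := by noncomm_ring
        _ = P * Q := by rw [hP2, hQ2]
    have hAr1 : LinearMap.range (P * Q).mulVecLin ≤ LinearMap.range P.mulVecLin := by
      rw [Matrix.mulVecLin_mul]
      exact LinearMap.range_comp_le_range _ _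
    have hAr2 : LinearMap.range (P * Q).mulVecLin ≤ LinearMap.range Q.mulVecLin := by
      rw [hc, Matrix.mulVecLin_mul]
      exact LinearMap.range_comp_le_range _ _
    have hAr3 : LinearMap.range P₀.mulVecLin ≤ LinearMap.range (P * Q).mulVecLin := by
      rw [hP₀range]
      rintro z ⟨hzP, hzQ⟩
      refine ⟨z, ?_⟩
      rw [Matrix.mulVecLin_apply, ← Matrix.mulVec_mulVec, mulVec_fix hQ2 hzQ,
        mulVec_fix hP2 hzP]
    have hAr4 : LinearMap.range (P * Q).mulVecLin ≤ LinearMap.range P₀.mulVecLin := by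
      rw [hP₀range]; exact le_inf hAr1 hAr2
    have hAH : (P * Q).IsHermitian := by
      unfold Matrix.IsHermitian
      rw [Matrix.conjTranspose_mul, hP.eq, hQ.eq, hc]
    have e1 : P₀ * (P * Q) = P * Q := mul_eq_of_range_le hP₀2 hAr4
    have e2 : (P * Q) * P₀ = P₀ := mul_eq_of_range_le hA2 hAr3
    have e3 : (P * Q) * P₀ = P * Q := by
      have := congrArg Matrix.conjTranspose e1
      rwa [Matrix.conjTranspose_mul, hAH.eq, hP₀.eq] at this
    have hPQ : P * Q = P₀ := by rw [← e3, e2]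
    -- now P + Q - P₀ is a nonzero hermitian idempotent
    have hM : (P + Q - P₀).IsHermitian := (hP.add hQ).sub hP₀
    have hMP : (P + Q - P₀) * P = P := by
      rw [← hPQ]
      calc (P + Q - P * Q) * P = P * P + Q * P - P * (Q * P) := by noncomm_ring
        _ = P * P + P * Q - P * (P * Q) := by rw [hc]
        _ = P + P * Q - P * Q := by rw [hP2, ← mul_assoc, hP2]
        _ = P := by abel
    have hM2 : (P + Q - P₀) * (P + Q - P₀) = P + Q - P₀ := by
      rw [← hPQ]
      have k1 : P * (P * Q) = P * Q := by rw [← mul_assoc, hP2]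
      have k2 : Q * (P * Q) = P * Q := by
        rw [← mul_assoc, ← hc, mul_assoc, hQ2]
      have k3 : (P * Q) * P = P * Q := by
        rw [mul_assoc, ← hc, ← mul_assoc, hP2]
      have k4 : (P * Q) * Q = P * Q := by rw [mul_assoc, hQ2]
      calc (P + Q - P * Q) * (P + Q - P * Q)
          = P * P + P * Q - P * (P * Q) + (Q * P + Q * Q - Q * (P * Q))
            - ((P * Q) * P + (P * Q) * Q - (P * Q) * (P * Q)) := by noncomm_ring
        _ = P + P * Q - P * Q + (P * Q + Q - P * Q) - (P * Q + P * Q - P * Q) := by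
            rw [hP2, hQ2, k1, k2, k3, k4, hA2, hc]
        _ = P + Q - P * Q := by abel
    have hMne : P + Q - P₀ ≠ 0 := by
      intro h0
      apply hPne
      rw [← hMP, h0, zero_mul]
    rw [hmax, norm_one_of_proj hM hM2 hMne]
end

section
/- Let A, B, X, Y be Hermitian positive semi-definite matrices in C^{n×n}. Set T = (A+B):(X+Y) and H = (A+X):(B+Y) − A:B − X:Y. Then H = [ (A+B)^† B − (X+Y)^† Y ]^* · T · [ (A+B)^† B − (X+Y)^† Y ]. In particular, H is positive semi-definite. -/
open scoped Matrix Matrix.Norms.L2Operator ComplexOrder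

namespace MPAux

open Matrix

variable {n : ℕ}

lemma eq_zero_of_mulVec {M : Matrix (Fin n) (Fin n) ℂ} (h : ∀ x, M *ᵥ x = 0) : M = 0 := by
  ext i j
  have h2 := congrFun (h (Pi.single j 1)) i
  simpa [Matrix.mulVec_single] using h2

lemma mp_cancel {S D M : Matrix (Fin n) (Fin n) ℂ} (hD : S * D * S = S)
    (hker : ∀ x, S *ᵥ x = 0 → M *ᵥ x = 0) : M * D * S = M := by
  have hz : S * (1 - D * S) = 0 := by
    rw [Matrix.mul_sub, Matrix.mul_one, ← Matrix.mul_assoc, hD, sub_self]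
  have key : M * (1 - D * S) = 0 := by
    apply eq_zero_of_mulVec
    intro x
    rw [← Matrix.mulVec_mulVec]
    apply hker
    rw [Matrix.mulVec_mulVec, hz, Matrix.zero_mulVec]
  have h3 : M - M * D * S = 0 := by
    rw [Matrix.mul_sub, Matrix.mul_one, ← Matrix.mul_assoc] at key
    exact key
  exact (sub_eq_zero.mp h3).symm

lemma psd_ker_left {M N : Matrix (Fin n) (Fin n) ℂ} (hM : M.PosSemidef) (hN : N.PosSemidef)
    {x : Fin n → ℂ} (h : (M + N) *ᵥ x = 0) : M *ᵥ x = 0 := by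
  have h1 : star x ⬝ᵥ M *ᵥ x + star x ⬝ᵥ N *ᵥ x = 0 := by
    rw [← dotProduct_add, ← Matrix.add_mulVec, h, dotProduct_zero]
  have h2 := (add_eq_zero_iff_of_nonneg (hM.dotProduct_mulVec_nonneg x) (hN.dotProduct_mulVec_nonneg x)).mp h1
  exact (hM.dotProduct_mulVec_zero_iff x).mp h2.1

lemma psd_ker_right {M N : Matrix (Fin n) (Fin n) ℂ} (hM : M.PosSemidef) (hN : N.PosSemidef)
    {x : Fin n → ℂ} (h : (M + N) *ᵥ x = 0) : N *ᵥ x = 0 :=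
  psd_ker_left hN hM (by rwa [add_comm])

lemma mp_unique {M D1 D2 : Matrix (Fin n) (Fin n) ℂ} (h1 : MPInv M D1) (h2 : MPInv M D2) :
    D1 = D2 := by
  obtain ⟨a1, b1, c1, d1⟩ := h1
  obtain ⟨a2, b2, c2, d2⟩ := h2
  have hMD : M * D1 = M * D2 := by
    calc M * D1 = (M * D1)ᴴ := c1.eq.symm
    _ = (M * D2 * M * D1)ᴴ := by rw [a2]
    _ = ((M * D2) * (M * D1))ᴴ := by rw [Matrix.mul_assoc (M * D2) M D1]
    _ = (M * D1)ᴴ * (M * D2)ᴴ := by rw [conjTranspose_mul]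
    _ = (M * D1) * (M * D2) := by rw [c1.eq, c2.eq]
    _ = (M * D1 * M) * D2 := by rw [Matrix.mul_assoc (M * D1) M D2]
    _ = M * D2 := by rw [a1]
  have hDM : D1 * M = D2 * M := by
    calc D1 * M = (D1 * M)ᴴ := d1.eq.symm
    _ = (D1 * (M * D2 * M))ᴴ := by rw [a2]
    _ = ((D1 * M) * (D2 * M))ᴴ := by
        rw [Matrix.mul_assoc D1 M (D2 * M), Matrix.mul_assoc M D2 M]
    _ = (D2 * M)ᴴ * (D1 * M)ᴴ := by rw [conjTranspose_mul]
    _ = (D2 * M) * (D1 * M) := by rw [d1.eq, d2.eq]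
    _ = D2 * (M * D1 * M) := by
        rw [Matrix.mul_assoc D2 M (D1 * M), Matrix.mul_assoc M D1 M]
    _ = D2 * M := by rw [a1]
  calc D1 = D1 * M * D1 := b1.symm
  _ = D1 * (M * D2) := by rw [Matrix.mul_assoc, hMD]
  _ = (D1 * M) * D2 := by rw [Matrix.mul_assoc]
  _ = (D2 * M) * D2 := by rw [hDM]
  _ = D2 := b2

lemma mp_herm {M D : Matrix (Fin n) (Fin n) ℂ} (hM : M.IsHermitian) (h : MPInv M D) :
    Dᴴ = D := by
  obtain ⟨a, b, c, d⟩ := h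
  refine mp_unique ⟨?_, ?_, ?_, ?_⟩ ⟨a, b, c, d⟩
  · have e1 : M * Dᴴ * M = (Mᴴ * D * Mᴴ)ᴴ := by
      simp only [conjTranspose_mul, conjTranspose_conjTranspose, Matrix.mul_assoc]
    rw [e1, hM.eq, a, hM.eq]
  · have e1 : Dᴴ * M * Dᴴ = (D * M * D)ᴴ := by
      simp only [conjTranspose_mul, conjTranspose_conjTranspose, hM.eq, Matrix.mul_assoc]
    rw [e1, b]
  · show (M * Dᴴ)ᴴ = M * Dᴴ
    calc (M * Dᴴ)ᴴ = D * Mᴴ := by rw [conjTranspose_mul, conjTranspose_conjTranspose]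
    _ = D * M := by rw [hM.eq]
    _ = (D * M)ᴴ := d.eq.symm
    _ = Mᴴ * Dᴴ := by rw [conjTranspose_mul]
    _ = M * Dᴴ := by rw [hM.eq]
  · show (Dᴴ * M)ᴴ = Dᴴ * M
    calc (Dᴴ * M)ᴴ = Mᴴ * D := by rw [conjTranspose_mul, conjTranspose_conjTranspose]
    _ = M * D := by rw [hM.eq]
    _ = (M * D)ᴴ := c.eq.symm
    _ = Dᴴ * Mᴴ := by rw [conjTranspose_mul]
    _ = Dᴴ * M := by rw [hM.eq]

lemma herm_flip {P Q R : Matrix (Fin n) (Fin n) ℂ} (hP : Pᴴ = P) (hQ : Qᴴ = Q) (hR : Rᴴ = R)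
    (h : P * Q * R = P) : R * Q * P = P := by
  have h2 := congrArg Matrix.conjTranspose h
  simpa only [conjTranspose_mul, hP, hQ, hR, Matrix.mul_assoc] using h2

end MPAux

open Matrix

/-- Factorization formula for H = (A+X):(B+Y) - A:B - X:Y; in particular H is PSD. -/
theorem perturbation_factorization {n : ℕ}
    (A B X Y Sd ABd XYd : Matrix (Fin n) (Fin n) ℂ)
    (hA : A.PosSemidef) (hB : B.PosSemidef) (hX : X.PosSemidef) (hY : Y.PosSemidef)
    (hSd : MPInv (A + X + (B + Y)) Sd)
    (hABd : MPInv (A + B) ABd) (hXYd : MPInv (X + Y) XYd) :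
    (A + X) * Sd * (B + Y) - A * ABd * B - X * XYd * Y
      = (ABd * B - XYd * Y)ᴴ * ((A + B) * Sd * (X + Y)) * (ABd * B - XYd * Y) ∧
    ((A + X) * Sd * (B + Y) - A * ABd * B - X * XYd * Y).PosSemidef := by
  have hSigP : (A + X + (B + Y)).PosSemidef := (hA.add hX).add (hB.add hY)
  have hSP : (A + B).PosSemidef := hA.add hB
  have hTP : (X + Y).PosSemidef := hX.add hY
  have hBH : Bᴴ = B := hB.1.eq
  have hYH : Yᴴ = Y := hY.1.eq
  have hSH : (A + B)ᴴ = A + B := hSP.1.eq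
  have hTH : (X + Y)ᴴ = X + Y := hTP.1.eq
  have hSigH : (A + X + (B + Y))ᴴ = A + X + (B + Y) := hSigP.1.eq
  obtain ⟨s1, s2, s3, s4⟩ := hSd
  obtain ⟨e1, e2, e3, e4⟩ := hABd
  obtain ⟨f1, f2, f3, f4⟩ := hXYd
  have hSdH : Sdᴴ = Sd := MPAux.mp_herm hSigP.1 ⟨s1, s2, s3, s4⟩
  have hEH : ABdᴴ = ABd := MPAux.mp_herm hSP.1 ⟨e1, e2, e3, e4⟩
  have hFH : XYdᴴ = XYd := MPAux.mp_herm hTP.1 ⟨f1, f2, f3, f4⟩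
  -- commutation facts
  have hcomm : (A + X + (B + Y)) * Sd = Sd * (A + X + (B + Y)) := by
    calc (A + X + (B + Y)) * Sd = ((A + X + (B + Y)) * Sd)ᴴ := s3.eq.symm
    _ = Sdᴴ * (A + X + (B + Y))ᴴ := by rw [conjTranspose_mul]
    _ = Sd * (A + X + (B + Y)) := by rw [hSdH, hSigH]
  have hTFcomm : (X + Y) * XYd = XYd * (X + Y) := by
    calc (X + Y) * XYd = ((X + Y) * XYd)ᴴ := f3.eq.symm
    _ = XYdᴴ * (X + Y)ᴴ := by rw [conjTranspose_mul]
    _ = XYd * (X + Y) := by rw [hFH, hTH]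
  have hFFT : XYd * XYd * (X + Y) = XYd := by
    calc XYd * XYd * (X + Y) = XYd * ((X + Y) * XYd) := by rw [hTFcomm]; noncomm_ring
    _ = XYd * (X + Y) * XYd := by noncomm_ring
    _ = XYd := f2
  -- kernel facts
  have kSB : ∀ x, (A + B) *ᵥ x = 0 → B *ᵥ x = 0 := fun x h => MPAux.psd_ker_right hA hB h
  have kTY : ∀ x, (X + Y) *ᵥ x = 0 → Y *ᵥ x = 0 := fun x h => MPAux.psd_ker_right hX hY h
  have kSigB : ∀ x, (A + X + (B + Y)) *ᵥ x = 0 → B *ᵥ x = 0 := fun x h =>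
    MPAux.psd_ker_left hB hY (MPAux.psd_ker_right (hA.add hX) (hB.add hY) h)
  have kSigY : ∀ x, (A + X + (B + Y)) *ᵥ x = 0 → Y *ᵥ x = 0 := fun x h =>
    MPAux.psd_ker_right hB hY (MPAux.psd_ker_right (hA.add hX) (hB.add hY) h)
  have kSigX : ∀ x, (A + X + (B + Y)) *ᵥ x = 0 → X *ᵥ x = 0 := fun x h =>
    MPAux.psd_ker_right hA hX (MPAux.psd_ker_left (hA.add hX) (hB.add hY) h)
  have kSigT : ∀ x, (A + X + (B + Y)) *ᵥ x = 0 → (X + Y) *ᵥ x = 0 := fun x h => by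
    rw [Matrix.add_mulVec, kSigX x h, kSigY x h, add_zero]
  have kSigF : ∀ x, (A + X + (B + Y)) *ᵥ x = 0 → XYd *ᵥ x = 0 := fun x h => by
    rw [← hFFT, ← Matrix.mulVec_mulVec, kSigT x h, Matrix.mulVec_zero]
  -- cancellation relations
  have r1 : B * ABd * (A + B) = B := MPAux.mp_cancel e1 kSB
  have r2 : (A + B) * ABd * B = B := MPAux.herm_flip hBH hEH hSH r1
  have r3 : Y * XYd * (X + Y) = Y := MPAux.mp_cancel f1 kTY
  have r4 : (X + Y) * XYd * Y = Y := MPAux.herm_flip hYH hFH hTH r3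
  have r5 : B * Sd * (A + X + (B + Y)) = B := MPAux.mp_cancel s1 kSigB
  have r6 : (A + X + (B + Y)) * Sd * B = B := MPAux.herm_flip hBH hSdH hSigH r5
  have r7 : Y * Sd * (A + X + (B + Y)) = Y := MPAux.mp_cancel s1 kSigY
  have r8 : (A + X + (B + Y)) * Sd * Y = Y := MPAux.herm_flip hYH hSdH hSigH r7
  have r9 : XYd * Sd * (A + X + (B + Y)) = XYd := MPAux.mp_cancel s1 kSigF
  have r10 : XYd * (A + X + (B + Y)) * Sd = XYd := by
    rw [Matrix.mul_assoc, hcomm, ← Matrix.mul_assoc, r9]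
  have r11t : (X + Y) * Sd * (A + X + (B + Y)) = X + Y := MPAux.mp_cancel s1 kSigT
  have r11 : (A + X + (B + Y)) * Sd * (X + Y) = X + Y := MPAux.herm_flip hTH hSdH hSigH r11t
  -- the four monomial reductions
  have hR1 : B * ABd * (A + B) * Sd * (X + Y) * ABd * B = B * ABd * B - B * Sd * B := by
    calc B * ABd * (A + B) * Sd * (X + Y) * ABd * B
        = (B * ABd * (A + B)) * (Sd * ((X + Y) * (ABd * B))) := by noncomm_ring
    _ = B * (Sd * ((X + Y) * (ABd * B))) := by rw [r1]
    _ = (B * Sd * (A + X + (B + Y))) * (ABd * B) - (B * Sd) * ((A + B) * ABd * B) := by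
        noncomm_ring
    _ = B * (ABd * B) - (B * Sd) * B := by rw [r5, r2]
    _ = B * ABd * B - B * Sd * B := by noncomm_ring
  have hR2 : B * ABd * (A + B) * Sd * (X + Y) * XYd * Y = B * Sd * Y := by
    calc B * ABd * (A + B) * Sd * (X + Y) * XYd * Y
        = (B * ABd * (A + B)) * (Sd * ((X + Y) * XYd * Y)) := by noncomm_ring
    _ = B * (Sd * ((X + Y) * XYd * Y)) := by rw [r1]
    _ = B * (Sd * Y) := by rw [r4]
    _ = B * Sd * Y := by noncomm_ring
  have hR3 : Y * XYd * (A + B) * Sd * (X + Y) * ABd * B = Y * Sd * B := by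
    calc Y * XYd * (A + B) * Sd * (X + Y) * ABd * B
        = Y * (XYd * (A + X + (B + Y)) * Sd) * ((X + Y) * (ABd * B))
          - (Y * XYd * (X + Y)) * (Sd * ((X + Y) * (ABd * B))) := by noncomm_ring
    _ = Y * XYd * ((X + Y) * (ABd * B)) - Y * (Sd * ((X + Y) * (ABd * B))) := by rw [r10, r3]
    _ = (Y * XYd * (X + Y)) * (ABd * B)
          - ((Y * Sd * (A + X + (B + Y))) * (ABd * B) - (Y * Sd) * ((A + B) * ABd * B)) := by
        noncomm_ring
    _ = Y * (ABd * B) - (Y * (ABd * B) - (Y * Sd) * B) := by rw [r3, r7, r2]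
    _ = Y * Sd * B := by noncomm_ring
  have hR4 : Y * XYd * (A + B) * Sd * (X + Y) * XYd * Y = Y * XYd * Y - Y * Sd * Y := by
    calc Y * XYd * (A + B) * Sd * (X + Y) * XYd * Y
        = Y * (XYd * (A + X + (B + Y)) * Sd) * ((X + Y) * XYd * Y)
          - (Y * XYd * (X + Y)) * (Sd * ((X + Y) * XYd * Y)) := by noncomm_ring
    _ = Y * XYd * ((X + Y) * XYd * Y) - Y * (Sd * ((X + Y) * XYd * Y)) := by rw [r10, r3]
    _ = Y * XYd * Y - Y * (Sd * Y) := by rw [r4]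
    _ = Y * XYd * Y - Y * Sd * Y := by noncomm_ring
  have hRHS : (B * ABd - Y * XYd) * ((A + B) * Sd * (X + Y)) * (ABd * B - XYd * Y)
      = B * ABd * B + Y * XYd * Y - (B + Y) * Sd * (B + Y) := by
    calc (B * ABd - Y * XYd) * ((A + B) * Sd * (X + Y)) * (ABd * B - XYd * Y)
        = B * ABd * (A + B) * Sd * (X + Y) * ABd * B
          - B * ABd * (A + B) * Sd * (X + Y) * XYd * Y
          - Y * XYd * (A + B) * Sd * (X + Y) * ABd * B
          + Y * XYd * (A + B) * Sd * (X + Y) * XYd * Y := by noncomm_ring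
    _ = (B * ABd * B - B * Sd * B) - B * Sd * Y - Y * Sd * B + (Y * XYd * Y - Y * Sd * Y) := by
        rw [hR1, hR2, hR3, hR4]
    _ = B * ABd * B + Y * XYd * Y - (B + Y) * Sd * (B + Y) := by noncomm_ring
  have hK : (ABd * B - XYd * Y)ᴴ = B * ABd - Y * XYd := by
    rw [conjTranspose_sub, conjTranspose_mul, conjTranspose_mul, hEH, hFH, hBH, hYH]
  have hsumB : A * ABd * B + B * ABd * B = B := by
    calc A * ABd * B + B * ABd * B = (A + B) * ABd * B := by noncomm_ring
    _ = B := r2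
  have hsumY : X * XYd * Y + Y * XYd * Y = Y := by
    calc X * XYd * Y + Y * XYd * Y = (X + Y) * XYd * Y := by noncomm_ring
    _ = Y := r4
  have hSigBY : (A + X + (B + Y)) * Sd * (B + Y) = B + Y := by
    calc (A + X + (B + Y)) * Sd * (B + Y)
        = (A + X + (B + Y)) * Sd * B + (A + X + (B + Y)) * Sd * Y := by noncomm_ring
    _ = B + Y := by rw [r6, r8]
  have hfirst : (A + X) * Sd * (B + Y) - A * ABd * B - X * XYd * Y
      = (ABd * B - XYd * Y)ᴴ * ((A + B) * Sd * (X + Y)) * (ABd * B - XYd * Y) := by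
    rw [hK, hRHS]
    have e0 : (A + X) * Sd * (B + Y)
        = (A + X + (B + Y)) * Sd * (B + Y) - (B + Y) * Sd * (B + Y) := by noncomm_ring
    rw [e0, hSigBY, eq_sub_of_add_eq hsumB, eq_sub_of_add_eq hsumY]
    abel
  refine ⟨hfirst, ?_⟩
  rw [hfirst]
  have h5 : (X + Y) * Sd * (A + X + (B + Y)) * Sd * (X + Y) = (X + Y) * Sd * (X + Y) := by
    calc (X + Y) * Sd * (A + X + (B + Y)) * Sd * (X + Y)
        = (X + Y) * (Sd * (A + X + (B + Y)) * Sd) * (X + Y) := by noncomm_ring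
    _ = (X + Y) * Sd * (X + Y) := by rw [s2]
  have hSSdT : (A + B) * Sd * (X + Y) = (X + Y) - (X + Y) * Sd * (X + Y) := by
    calc (A + B) * Sd * (X + Y)
        = (A + X + (B + Y)) * Sd * (X + Y) - (X + Y) * Sd * (X + Y) := by noncomm_ring
    _ = (X + Y) - (X + Y) * Sd * (X + Y) := by rw [r11]
  have hWid : (A + B) * Sd * (X + Y)
      = (Sd * (X + Y))ᴴ * (A + B) * (Sd * (X + Y))
        + (1 - Sd * (X + Y))ᴴ * (X + Y) * (1 - Sd * (X + Y)) := by
    have hconj1 : (Sd * (X + Y))ᴴ = (X + Y) * Sd := by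
      rw [conjTranspose_mul, hSdH, hTH]
    have hconj2 : (1 - Sd * (X + Y))ᴴ = 1 - (X + Y) * Sd := by
      rw [conjTranspose_sub, conjTranspose_one, hconj1]
    rw [hconj1, hconj2, hSSdT]
    have e2 : (X + Y) * Sd * (A + B) * (Sd * (X + Y))
        = (X + Y) * Sd * (X + Y) - (X + Y) * Sd * (X + Y) * Sd * (X + Y) := by
      calc (X + Y) * Sd * (A + B) * (Sd * (X + Y))
          = (X + Y) * Sd * (A + X + (B + Y)) * Sd * (X + Y)
            - (X + Y) * Sd * (X + Y) * Sd * (X + Y) := by noncomm_ring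
      _ = (X + Y) * Sd * (X + Y) - (X + Y) * Sd * (X + Y) * Sd * (X + Y) := by rw [h5]
    rw [e2]
    noncomm_ring
  have hW : ((A + B) * Sd * (X + Y)).PosSemidef := by
    rw [hWid]
    exact ((hA.add hB).conjTranspose_mul_mul_same _).add
      ((hX.add hY).conjTranspose_mul_mul_same _)
  exact hW.conjTranspose_mul_mul_same _
end

section
/- Let A, B, X be Hermitian positive semi-definite matrices in C^{n×n}. Then (A+X):B − A:B = [ (A+B)^† B ]^* · [ (A+B):X ] · [ (A+B)^† B ]. -/
/-!
Since `B ≤ A + B` and `B ≤ A + X + B`, the kernel of each of these sums lies in the kernel of `B`,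
so for any `D` with `S D S = S` (`S` one of the sums) we get `S D B = B = B D S`. With these,
both sides reduce to `B (A+B)^† B - B (A+X+B)^† B`; on the right one writes
`X = (A + X + B) - (A + B)`.
-/

open scoped Matrix Matrix.Norms.L2Operator ComplexOrder

namespace Matrix

variable {𝕜 ι : Type*} [RCLike 𝕜] [Fintype ι] {P Q : Matrix ι ι 𝕜}

lemma PosSemidef.mulVec_eq_zero_of_add_mulVec_eq_zero_s15 (hP : P.PosSemidef) (hQ : Q.PosSemidef)
    {v : ι → 𝕜} (h : (P + Q) *ᵥ v = 0) : Q *ᵥ v = 0 := by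
  rw [← hQ.dotProduct_mulVec_zero_iff]
  have hsum : star v ⬝ᵥ P *ᵥ v + star v ⬝ᵥ Q *ᵥ v = 0 := by
    rw [← dotProduct_add, ← add_mulVec, h, dotProduct_zero]
  exact ((add_eq_zero_iff_of_nonneg (hP.dotProduct_mulVec_nonneg v)
    (hQ.dotProduct_mulVec_nonneg v)).mp hsum).2

lemma PosSemidef.mul_eq_zero_of_add_mul_eq_zero_s15 [DecidableEq ι] (hP : P.PosSemidef)
    (hQ : Q.PosSemidef) {E : Matrix ι ι 𝕜} (h : (P + Q) * E = 0) : Q * E = 0 := by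
  refine ext_of_mulVec_single fun i => ?_
  rw [← mulVec_mulVec, zero_mulVec]
  exact hP.mulVec_eq_zero_of_add_mulVec_eq_zero_s15 hQ (by rw [mulVec_mulVec, h, zero_mulVec])

lemma PosSemidef.mul_eq_zero_of_mul_add_eq_zero [DecidableEq ι] (hP : P.PosSemidef)
    (hQ : Q.PosSemidef) {E : Matrix ι ι 𝕜} (h : E * (P + Q) = 0) : E * Q = 0 := by
  have hPQ : (P + Q)ᴴ = P + Q := (hP.add hQ).isHermitian.eq
  have := hP.mul_eq_zero_of_add_mul_eq_zero_s15 hQ (E := Eᴴ)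
    (by rw [← hPQ, ← conjTranspose_mul, h, conjTranspose_zero])
  rwa [← hQ.isHermitian.eq, ← conjTranspose_mul, conjTranspose_eq_zero] at this

lemma PosSemidef.add_mul_mul_eq_right [DecidableEq ι] (hP : P.PosSemidef) (hQ : Q.PosSemidef)
    {D : Matrix ι ι 𝕜} (hD : (P + Q) * D * (P + Q) = P + Q) : (P + Q) * D * Q = Q := by
  have := hP.mul_eq_zero_of_mul_add_eq_zero hQ (E := 1 - (P + Q) * D)
    (by rw [sub_mul, one_mul, hD, sub_self])
  rwa [sub_mul, one_mul, sub_eq_zero, eq_comm] at this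

lemma PosSemidef.mul_mul_add_eq_left [DecidableEq ι] (hP : P.PosSemidef) (hQ : Q.PosSemidef)
    {D : Matrix ι ι 𝕜} (hD : (P + Q) * D * (P + Q) = P + Q) : Q * D * (P + Q) = Q := by
  have := hP.mul_eq_zero_of_add_mul_eq_zero_s15 hQ (E := 1 - D * (P + Q))
    (by rw [mul_sub, mul_one, ← Matrix.mul_assoc, hD, sub_self])
  rwa [mul_sub, mul_one, sub_eq_zero, eq_comm, ← Matrix.mul_assoc] at this

end Matrix

/-- Factorization of the one-sided perturbation (A+X):B - A:B. -/
theorem one_sided_perturbation_factorization {n : ℕ}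
    (A B X Sd ABd : Matrix (Fin n) (Fin n) ℂ)
    (hA : A.PosSemidef) (hB : B.PosSemidef) (hX : X.PosSemidef)
    (hSd : MPInv (A + X + B) Sd) (hABd : MPInv (A + B) ABd) :
    (A + X) * Sd * B - A * ABd * B
      = (ABd * B)ᴴ * ((A + B) * Sd * X) * (ABd * B) := by
  have h₁ : (A + X + B) * Sd * B = B := (hA.add hX).add_mul_mul_eq_right hB hSd.1
  have h₂ : B * Sd * (A + X + B) = B := (hA.add hX).mul_mul_add_eq_left hB hSd.1
  have h₃ : (A + B) * ABd * B = B := hA.add_mul_mul_eq_right hB hABd.1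
  have h₄ : (ABd * B)ᴴ * (A + B) = B := by
    simpa [Matrix.mul_assoc, (hA.add hB).isHermitian.eq, hB.isHermitian.eq]
      using congrArg Matrix.conjTranspose h₃
  calc (A + X) * Sd * B - A * ABd * B
      = (A + X + B) * Sd * B - (A + B) * ABd * B + B * ABd * B - B * Sd * B := by noncomm_ring
    _ = B * Sd * (A + X + B) * ABd * B - B * Sd * ((A + B) * ABd * B) := by
      rw [h₁, h₂, h₃]; abel
    _ = (ABd * B)ᴴ * (A + B) * Sd * ((A + X + B) - (A + B)) * ABd * B := by
      rw [h₄]; noncomm_ring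
    _ = (ABd * B)ᴴ * ((A + B) * Sd * X) * (ABd * B) := by
      simp only [add_sub_cancel_left, add_sub_add_right_eq_sub, Matrix.mul_assoc]
end

section
/- Let A, B, X be Hermitian positive semi-definite matrices in C^{n×n} with A+B+X ≠ 0. Then ‖(A+X):B − A:B‖ ≤ ‖(A+B)^† B‖² · ‖A+B‖ · ‖X‖ / (‖A+B‖ + ‖X‖). -/
open scoped Matrix Matrix.Norms.L2Operator ComplexOrder

variable {n : ℕ}

theorem mpinv_unique {A B C : Matrix (Fin n) (Fin n) ℂ} (hB : MPInv A B) (hC : MPInv A C) :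
    B = C := by
  obtain ⟨b1, b2, b3, b4⟩ := hB
  obtain ⟨c1, c2, c3, c4⟩ := hC
  have hAB : A * B = A * C := by
    calc A * B = (A * C * A) * B := by rw [c1]
    _ = (A * C) * (A * B) := by rw [mul_assoc, mul_assoc]
    _ = (A * C)ᴴ * (A * B)ᴴ := by rw [c3.eq, b3.eq]
    _ = ((A * B) * (A * C))ᴴ := by simp [Matrix.conjTranspose_mul, mul_assoc]
    _ = ((A * B * A) * C)ᴴ := by rw [mul_assoc (A*B) A C]
    _ = (A * C)ᴴ := by rw [b1]
    _ = A * C := c3.eq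
  have hBA : B * A = C * A := by
    calc B * A = B * (A * C * A) := by rw [c1]
    _ = (B * A) * (C * A) := by simp [mul_assoc]
    _ = (B * A)ᴴ * (C * A)ᴴ := by rw [b4.eq, c4.eq]
    _ = ((C * A) * (B * A))ᴴ := by simp [Matrix.conjTranspose_mul, mul_assoc]
    _ = (C * (A * B * A))ᴴ := by simp [mul_assoc]
    _ = (C * A)ᴴ := by rw [b1]
    _ = C * A := c4.eq
  calc B = B * A * B := b2.symm
  _ = B * (A * C) := by rw [mul_assoc, hAB]
  _ = (B * A) * C := by rw [mul_assoc]
  _ = (C * A) * C := by rw [hBA]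
  _ = C := c2

theorem mpinv_herm {A B : Matrix (Fin n) (Fin n) ℂ} (hA : A.IsHermitian) (hB : MPInv A B) :
    B.IsHermitian := by
  obtain ⟨b1, b2, b3, b4⟩ := hB
  have h : MPInv A Bᴴ := by
    refine ⟨?_, ?_, ?_, ?_⟩
    · calc A * Bᴴ * A = (Aᴴ * B * Aᴴ)ᴴ := by simp [Matrix.conjTranspose_mul, mul_assoc]
      _ = A := by rw [hA.eq, b1, hA.eq]
    · calc Bᴴ * A * Bᴴ = (B * Aᴴ * B)ᴴ := by simp [Matrix.conjTranspose_mul, mul_assoc]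
      _ = Bᴴ := by rw [hA.eq, b2]
    · show (A * Bᴴ)ᴴ = A * Bᴴ
      calc (A * Bᴴ)ᴴ = B * Aᴴ := by simp [Matrix.conjTranspose_mul]
      _ = B * A := by rw [hA.eq]
      _ = (B * A)ᴴ := b4.eq.symm
      _ = Aᴴ * Bᴴ := by simp [Matrix.conjTranspose_mul]
      _ = A * Bᴴ := by rw [hA.eq]
    · show (Bᴴ * A)ᴴ = Bᴴ * A
      calc (Bᴴ * A)ᴴ = Aᴴ * B := by simp [Matrix.conjTranspose_mul]
      _ = A * B := by rw [hA.eq]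
      _ = (A * B)ᴴ := b3.eq.symm
      _ = Bᴴ * Aᴴ := by simp [Matrix.conjTranspose_mul]
      _ = Bᴴ * A := by rw [hA.eq]
  exact mpinv_unique h ⟨b1,b2,b3,b4⟩



theorem psd_sqrt_exists {B : Matrix (Fin n) (Fin n) ℂ} (hB : B.PosSemidef) :
    ∃ R : Matrix (Fin n) (Fin n) ℂ, R * R = B ∧ Rᴴ = R := by
  open scoped MatrixOrder in
  exact ⟨CFC.sqrt B, CFC.sqrt_mul_sqrt_self B hB.nonneg, (Matrix.nonneg_iff_posSemidef.mp (CFC.sqrt_nonneg B)).1.eq⟩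

theorem psd_neg_zero {N : Matrix (Fin n) (Fin n) ℂ} (h1 : N.PosSemidef)
    (h2 : (-N).PosSemidef) : N = 0 := by
  have hv : ∀ x : Fin n → ℂ, N *ᵥ x = 0 := by
    intro x
    refine (h1.dotProduct_mulVec_zero_iff x).mp (le_antisymm ?_ (h1.dotProduct_mulVec_nonneg x))
    have := h2.dotProduct_mulVec_nonneg x
    rw [Matrix.neg_mulVec, dotProduct_neg] at this
    exact neg_nonneg.mp this
  ext i j
  have := congrFun (hv (Pi.single j 1)) i
  simpa [Matrix.mulVec_single] using this

theorem psd_smul_real {N : Matrix (Fin n) (Fin n) ℂ} (hN : N.PosSemidef) {r : ℝ} (hr : 0 ≤ r) :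
    ((r : ℂ) • N).PosSemidef := by
  refine Matrix.PosSemidef.of_dotProduct_mulVec_nonneg ?_ ?_
  · show ((r:ℂ) • N)ᴴ = (r:ℂ) • N
    rw [Matrix.conjTranspose_smul, hN.1.eq]
    simp [Complex.star_def, Complex.conj_ofReal]
  · intro x
    rw [Matrix.smul_mulVec, dotProduct_smul]
    have h := hN.dotProduct_mulVec_nonneg x
    have h2 := Complex.eq_re_of_ofReal_le h
    rw [h2] at h ⊢
    rw [smul_eq_mul, ← Complex.ofReal_mul]
    rw [Complex.zero_le_real] at h ⊢
    exact mul_nonneg hr h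

theorem absorb {S B : Matrix (Fin n) (Fin n) ℂ} (hS : S.PosSemidef) (hB : B.PosSemidef)
    (hSB : (S - B).PosSemidef) {Sd : Matrix (Fin n) (Fin n) ℂ} (hSd : MPInv S Sd)
    (hSdh : Sd.IsHermitian) : B * Sd * S = B ∧ S * Sd * B = B := by
  obtain ⟨s1, s2, s3, s4⟩ := hSd
  set P : Matrix (Fin n) (Fin n) ℂ := 1 - Sd * S with hPdef
  have hP : Pᴴ = P := by
    rw [hPdef, Matrix.conjTranspose_sub, Matrix.conjTranspose_one, s4.eq]
  have hSP : S * P = 0 := by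
    rw [hPdef, mul_sub, mul_one, ← mul_assoc, s1, sub_self]
  have hPS : Pᴴ * S = 0 := by
    rw [hP]
    calc P * S = (Sᴴ * Pᴴ)ᴴ := by simp [Matrix.conjTranspose_mul, hP]
    _ = (S * P)ᴴ := by rw [hS.1.eq, hP]
    _ = 0 := by rw [hSP]; simp
  clear_value P
  have hsum : Pᴴ * (S - B) * P + Pᴴ * B * P = 0 := by
    have : Pᴴ * (S - B) * P + Pᴴ * B * P = (Pᴴ * S) * P := by noncomm_ring
    rw [this, hPS, Matrix.zero_mul]
  have hBP0 : Pᴴ * B * P = 0 := by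
    have hneg : (-(Pᴴ * B * P)).PosSemidef := by
      have h := hSB.conjTranspose_mul_mul_same P
      have h2 : -(Pᴴ * B * P) = Pᴴ * (S - B) * P := neg_eq_of_add_eq_zero_left hsum
      rw [h2]; exact h
    exact psd_neg_zero (hB.conjTranspose_mul_mul_same P) hneg
  have hBP : B * P = 0 := by
    obtain ⟨R, hRR, hRh⟩ := psd_sqrt_exists hB
    have : (R * P)ᴴ * (R * P) = 0 := by
      calc (R * P)ᴴ * (R * P) = Pᴴ * (Rᴴ * R) * P := by rw [Matrix.conjTranspose_mul]; simp [mul_assoc]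
      _ = Pᴴ * B * P := by rw [hRh, hRR]
      _ = 0 := hBP0
    have hRP : R * P = 0 := Matrix.conjTranspose_mul_self_eq_zero.mp this
    calc B * P = R * (R * P) := by rw [← mul_assoc, hRR]
    _ = 0 := by rw [hRP, Matrix.mul_zero]
  have h1 : B * Sd * S = B := by
    have : B * (1 - Sd * S) = 0 := by rw [← hPdef]; exact hBP
    rw [mul_sub, mul_one, ← mul_assoc, sub_eq_zero] at this
    exact this.symm
  refine ⟨h1, ?_⟩
  calc S * Sd * B = (Bᴴ * Sdᴴ * Sᴴ)ᴴ := by simp [Matrix.conjTranspose_mul, mul_assoc]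
  _ = (B * Sd * S)ᴴ := by rw [hB.1.eq, hSdh.eq, hS.1.eq]
  _ = B := by rw [h1, hB.1.eq]

theorem re_form_le {T : Matrix (Fin n) (Fin n) ℂ} (x : Fin n → ℂ) :
    (star x ⬝ᵥ T *ᵥ x).re ≤ ‖T‖ * ‖((WithLp.equiv 2 (Fin n → ℂ)).symm x : EuclideanSpace ℂ (Fin n))‖ ^ 2 := by
  set y : EuclideanSpace ℂ (Fin n) := (WithLp.equiv 2 (Fin n → ℂ)).symm x with hy
  have h1 : star x ⬝ᵥ T *ᵥ x = (inner ℂ y ((WithLp.equiv 2 (Fin n → ℂ)).symm (T *ᵥ x)) : ℂ) :=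
    ((EuclideanSpace.inner_toLp_toLp x (T *ᵥ x)).trans (dotProduct_comm _ _)).symm
  have h2 : ‖(inner ℂ y ((WithLp.equiv 2 (Fin n → ℂ)).symm (T *ᵥ x)) : ℂ)‖
      ≤ ‖y‖ * ‖((WithLp.equiv 2 (Fin n → ℂ)).symm (T *ᵥ x) : EuclideanSpace ℂ (Fin n))‖ :=
    norm_inner_le_norm _ _
  have h3 : ‖((WithLp.equiv 2 (Fin n → ℂ)).symm (T *ᵥ x) : EuclideanSpace ℂ (Fin n))‖ ≤ ‖T‖ * ‖y‖ :=
    Matrix.l2_opNorm_mulVec T y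
  have h4 : (star x ⬝ᵥ T *ᵥ x).re ≤ ‖star x ⬝ᵥ T *ᵥ x‖ := Complex.re_le_norm _
  calc (star x ⬝ᵥ T *ᵥ x).re ≤ ‖star x ⬝ᵥ T *ᵥ x‖ := h4
  _ ≤ ‖y‖ * (‖T‖ * ‖y‖) := by
      rw [h1]
      exact h2.trans (by nlinarith [norm_nonneg y, norm_nonneg T, h3, mul_le_mul_of_nonneg_left h3 (norm_nonneg y)])
  _ = ‖T‖ * ‖y‖ ^ 2 := by ring

theorem dot_self_eq {x : Fin n → ℂ} :
    star x ⬝ᵥ x = ((‖((WithLp.equiv 2 (Fin n → ℂ)).symm x : EuclideanSpace ℂ (Fin n))‖ ^ 2 : ℝ) : ℂ) := by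
  have h1 : star x ⬝ᵥ x = (inner ℂ ((WithLp.equiv 2 (Fin n → ℂ)).symm x : EuclideanSpace ℂ (Fin n)) ((WithLp.equiv 2 (Fin n → ℂ)).symm x) : ℂ) :=
    ((EuclideanSpace.inner_toLp_toLp x x).trans (dotProduct_comm _ _)).symm
  rw [h1, inner_self_eq_norm_sq_to_K]
  norm_cast

theorem psd_norm_one_sub {T : Matrix (Fin n) (Fin n) ℂ} (hT : T.PosSemidef) :
    (((‖T‖ : ℝ) : ℂ) • (1 : Matrix (Fin n) (Fin n) ℂ) - T).PosSemidef := by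
  refine Matrix.PosSemidef.of_dotProduct_mulVec_nonneg ?_ ?_
  · show _ = _
    rw [Matrix.conjTranspose_sub, Matrix.conjTranspose_smul, Matrix.conjTranspose_one, hT.1.eq]
    simp [Complex.star_def, Complex.conj_ofReal]
  · intro x
    rw [Matrix.sub_mulVec, Matrix.smul_mulVec, Matrix.one_mulVec, dotProduct_sub,
      dotProduct_smul]
    have ht := Complex.eq_re_of_ofReal_le (hT.dotProduct_mulVec_nonneg x)
    rw [dot_self_eq (x := x), ht, smul_eq_mul, ← Complex.ofReal_mul, ← Complex.ofReal_sub,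
      Complex.zero_le_real, sub_nonneg]
    exact re_form_le x

theorem norm_le_of_mulVec {M : Matrix (Fin n) (Fin n) ℂ} {c : ℝ} (hc : 0 ≤ c)
    (h : ∀ y : EuclideanSpace ℂ (Fin n),
      ‖((WithLp.equiv 2 (Fin n → ℂ)).symm (M *ᵥ y) : EuclideanSpace ℂ (Fin n))‖ ≤ c * ‖y‖) :
    ‖M‖ ≤ c := by
  rw [Matrix.l2_opNorm_def]
  exact ContinuousLinearMap.opNorm_le_bound _ hc fun y => h y

theorem norm_le_of_psd_le {M : Matrix (Fin n) (Fin n) ℂ} {c : ℝ} (hM : M.PosSemidef) (hc : 0 ≤ c)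
    (h : ((c : ℂ) • (1 : Matrix (Fin n) (Fin n) ℂ) - M).PosSemidef) : ‖M‖ ≤ c := by
  obtain ⟨R, hRR, hRh⟩ := psd_sqrt_exists hM
  have key : ((c : ℂ) • M - M * M).PosSemidef := by
    have h2 := h.mul_mul_conjTranspose_same R
    have h3 : R * ((c : ℂ) • 1 - M) * Rᴴ = (c : ℂ) • M - M * M := by
      rw [hRh, mul_sub, sub_mul, mul_smul_comm, smul_mul_assoc, mul_one, hRR]
      congr 1
      rw [← hRR]
      noncomm_ring
    rwa [h3] at h2
  have hq : ∀ x : Fin n → ℂ, (star x ⬝ᵥ (M * M) *ᵥ x).re ≤ c * (c * ‖((WithLp.equiv 2 (Fin n → ℂ)).symm x : EuclideanSpace ℂ (Fin n))‖^2) := by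
    intro x
    have k1 := key.dotProduct_mulVec_nonneg x
    rw [Matrix.sub_mulVec, Matrix.smul_mulVec, dotProduct_sub, dotProduct_smul,
      sub_nonneg] at k1
    have k2 := Complex.le_def.mp k1
    have k3 : (star x ⬝ᵥ M *ᵥ x).re ≤ c * ‖((WithLp.equiv 2 (Fin n → ℂ)).symm x : EuclideanSpace ℂ (Fin n))‖^2 := by
      have h4 := h.dotProduct_mulVec_nonneg x
      rw [Matrix.sub_mulVec, Matrix.smul_mulVec, Matrix.one_mulVec, dotProduct_sub,
        dotProduct_smul, sub_nonneg, dot_self_eq (x := x)] at h4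
      have h5 := (Complex.le_def.mp h4).1
      simpa [← Complex.ofReal_pow] using h5
    calc (star x ⬝ᵥ (M * M) *ᵥ x).re ≤ ((c:ℂ) • (star x ⬝ᵥ M *ᵥ x)).re := k2.1
    _ = c * (star x ⬝ᵥ M *ᵥ x).re := by simp [Complex.smul_re]
    _ ≤ c * (c * ‖((WithLp.equiv 2 (Fin n → ℂ)).symm x : EuclideanSpace ℂ (Fin n))‖^2) := by
        have := mul_le_mul_of_nonneg_left k3 hc
        simpa [mul_assoc] using this
  refine norm_le_of_mulVec hc fun y => ?_
  have hnorm : ‖((WithLp.equiv 2 (Fin n → ℂ)).symm (M *ᵥ y) : EuclideanSpace ℂ (Fin n))‖ ^ 2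
      = (star (y : Fin n → ℂ) ⬝ᵥ (M * M) *ᵥ (y : Fin n → ℂ)).re := by
    have h1 : (inner ℂ ((WithLp.equiv 2 (Fin n → ℂ)).symm (M *ᵥ y) : EuclideanSpace ℂ (Fin n)) ((WithLp.equiv 2 (Fin n → ℂ)).symm (M *ᵥ y)) : ℂ) = star (M *ᵥ (y : Fin n → ℂ)) ⬝ᵥ (M *ᵥ (y : Fin n → ℂ)) :=
      (EuclideanSpace.inner_toLp_toLp _ _).trans (dotProduct_comm _ _)
    have h2 : star (M *ᵥ (y : Fin n → ℂ)) ⬝ᵥ (M *ᵥ (y : Fin n → ℂ)) = star (y : Fin n → ℂ) ⬝ᵥ (Mᴴ * M) *ᵥ (y : Fin n → ℂ) := by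
      simp [Matrix.star_mulVec, Matrix.dotProduct_mulVec, ← Matrix.vecMul_vecMul]
    have h3 : Mᴴ = M := hM.1.eq
    have h4 := @inner_self_eq_norm_sq ℂ _ _ _ _ ((WithLp.equiv 2 (Fin n → ℂ)).symm (M *ᵥ y) : EuclideanSpace ℂ (Fin n))
    rw [← h4, h1, h2, h3, RCLike.re_to_complex]
  have hEy : ‖((WithLp.equiv 2 (Fin n → ℂ)).symm ((y : Fin n → ℂ)) : EuclideanSpace ℂ (Fin n))‖ = ‖y‖ := rfl
  have hsq : ‖((WithLp.equiv 2 (Fin n → ℂ)).symm (M *ᵥ y) : EuclideanSpace ℂ (Fin n))‖ ^ 2 ≤ (c * ‖y‖) ^ 2 := by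
    rw [hnorm]
    calc (star (y : Fin n → ℂ) ⬝ᵥ (M * M) *ᵥ (y : Fin n → ℂ)).re
        ≤ c * (c * ‖((WithLp.equiv 2 (Fin n → ℂ)).symm (y : Fin n → ℂ) : EuclideanSpace ℂ (Fin n))‖^2) := hq y
    _ = (c * ‖y‖) ^ 2 := by rw [hEy]; ring
  have := Real.sqrt_le_sqrt hsq
  rwa [Real.sqrt_sq (norm_nonneg _), Real.sqrt_sq (by positivity)] at this

set_option maxHeartbeats 2000000 in
theorem central {T X Sd : Matrix (Fin n) (Fin n) ℂ} (hT : T.PosSemidef) (hX : X.PosSemidef)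
    (hSd : MPInv (T + X) Sd) (hTne : T ≠ 0) (hXne : X ≠ 0) :
    ‖T - T * Sd * T‖ ≤ ‖T‖ * ‖X‖ / (‖T‖ + ‖X‖) := by
  have hS : (T + X).PosSemidef := hT.add hX
  have hSdh : Sd.IsHermitian := mpinv_herm hS.1 hSd
  obtain ⟨hTS, hST⟩ := absorb hS hT (by rw [add_sub_cancel_left]; exact hX) hSd hSdh
  obtain ⟨s1, s2, s3, s4⟩ := hSd
  set a : ℝ := ‖T‖ with hadef
  set b : ℝ := ‖X‖ with hbdef
  have ha : 0 < a := by rw [hadef]; exact norm_pos_iff.mpr hTne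
  have hb : 0 < b := by rw [hbdef]; exact norm_pos_iff.mpr hXne
  have hab : 0 < a + b := by linarith
  -- M is PSD
  have hCH : ((1 : Matrix (Fin n) (Fin n) ℂ) - Sd * T)ᴴ = 1 - T * Sd := by
    simp [Matrix.conjTranspose_sub, Matrix.conjTranspose_mul, hSdh.eq, hT.1.eq]
  have hDH2 : ((Sd * T : Matrix (Fin n) (Fin n) ℂ))ᴴ = T * Sd := by
    simp [Matrix.conjTranspose_mul, hSdh.eq, hT.1.eq]
  have e3 : T*Sd*T*Sd*T + T*Sd*X*Sd*T = T*Sd*T := by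
    have h5 : T * (Sd*(T+X)*Sd) * T = T*Sd*T := by rw [s2]
    calc T*Sd*T*Sd*T + T*Sd*X*Sd*T = T * (Sd*(T+X)*Sd) * T := by noncomm_ring
    _ = T*Sd*T := h5
  have hMeq : T - T*Sd*T
      = ((1 : Matrix (Fin n) (Fin n) ℂ) - Sd*T)ᴴ * T * (1 - Sd*T) + (Sd*T)ᴴ * X * (Sd*T) := by
    rw [hCH, hDH2]
    have expand : ((1 : Matrix (Fin n) (Fin n) ℂ) - T*Sd)*T*(1 - Sd*T) + (T*Sd)*X*(Sd*T)
        = T - T*Sd*T - T*Sd*T + (T*Sd*T*Sd*T + T*Sd*X*Sd*T) := by noncomm_ring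
    rw [expand, e3]
    abel
  have hMpsd : (T - T*Sd*T).PosSemidef := by
    rw [hMeq]
    exact (hT.conjTranspose_mul_mul_same _).add (hX.conjTranspose_mul_mul_same _)
  -- the scaled majorization
  set α : ℂ := ((a : ℝ) : ℂ) with hα
  set β : ℂ := ((b : ℝ) : ℂ) with hβ
  set D : Matrix (Fin n) (Fin n) ℂ := α • 1 - (α + β) • (Sd * T) with hD
  have hDH : Dᴴ = α • 1 - (α + β) • (T * Sd) := by
    rw [hD]
    simp [Matrix.conjTranspose_sub, Matrix.conjTranspose_smul, Matrix.conjTranspose_mul,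
      hSdh.eq, hT.1.eq, hα, hβ, Complex.star_def, Complex.conj_ofReal]
  have hmid : T*Sd*(T+X)*Sd*T = T*Sd*T := by
    calc T*Sd*(T+X)*Sd*T = (T*Sd*(T+X))*(Sd*T) := by noncomm_ring
    _ = T*(Sd*T) := by rw [hTS]
    _ = T*Sd*T := by rw [mul_assoc]
  have hkey : Dᴴ * (T+X) * D
      = (α*α)•(T+X) - (α*(α+β))•T - (α*(α+β))•T + ((α+β)*(α+β))•(T*Sd*T) := by
    rw [hDH, hD]
    have expand : (α • 1 - (α + β) • (T * Sd)) * (T+X) * (α • 1 - (α + β) • (Sd * T))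
        = (α*α)•(T+X) - (α*(α+β))•(T*Sd*(T+X)) - (α*(α+β))•((T+X)*(Sd*T))
          + ((α+β)*(α+β))•(T*Sd*(T+X)*(Sd*T)) := by
      simp only [mul_sub, sub_mul, smul_mul_assoc, mul_smul_comm, one_mul, mul_one, smul_smul]
      module
    rw [expand, hTS]
    rw [show (T+X)*(Sd*T) = (T+X)*Sd*T from (mul_assoc _ _ _).symm, hST, ← mul_assoc]
  have hNid : ((a*b*(a+b) : ℝ) : ℂ) • (1 : Matrix (Fin n) (Fin n) ℂ)
        - (((a+b)^2 : ℝ) : ℂ) • (T - T*Sd*T)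
      = (β*β) • (α•1 - T) + (α*α) • (β•1 - X) + Dᴴ * (T+X) * D := by
    rw [hkey]
    have c1 : ((a*b*(a+b) : ℝ) : ℂ) = α*β*(α+β) := by rw [hα, hβ]; push_cast; ring
    have c2 : (((a+b)^2 : ℝ) : ℂ) = (α+β)*(α+β) := by rw [hα, hβ]; push_cast; ring
    rw [c1, c2]
    simp only [smul_sub, smul_add, smul_smul]
    module
  have hNpsd : (((a*b*(a+b) : ℝ) : ℂ) • (1 : Matrix (Fin n) (Fin n) ℂ)
      - (((a+b)^2 : ℝ) : ℂ) • (T - T*Sd*T)).PosSemidef := by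
    rw [hNid]
    have p1 : ((β*β) • (α•1 - T)).PosSemidef := by
      have : (β*β) = ((b^2 : ℝ) : ℂ) := by rw [hβ]; push_cast; ring
      rw [this]
      exact psd_smul_real (by rw [hα, hadef]; exact psd_norm_one_sub hT) (by positivity)
    have p2 : ((α*α) • (β•1 - X)).PosSemidef := by
      have : (α*α) = ((a^2 : ℝ) : ℂ) := by rw [hα]; push_cast; ring
      rw [this]
      exact psd_smul_real (by rw [hβ, hbdef]; exact psd_norm_one_sub hX) (by positivity)
    exact (p1.add p2).add (hS.conjTranspose_mul_mul_same D)
  -- rescale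
  have hcge : (0:ℝ) ≤ a * b / (a + b) := by positivity
  have hscale : ((a * b / (a + b) : ℝ) : ℂ) • (1 : Matrix (Fin n) (Fin n) ℂ) - (T - T*Sd*T)
      = ((((a+b)^2)⁻¹ : ℝ) : ℂ) • (((a*b*(a+b) : ℝ) : ℂ) • (1 : Matrix (Fin n) (Fin n) ℂ)
        - (((a+b)^2 : ℝ) : ℂ) • (T - T*Sd*T)) := by
    rw [smul_sub, smul_smul, smul_smul]
    have d1 : ((((a+b)^2)⁻¹ : ℝ) : ℂ) * ((a*b*(a+b) : ℝ) : ℂ) = ((a * b / (a + b) : ℝ) : ℂ) := by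
      rw [← Complex.ofReal_mul]
      congr 1
      field_simp
    have d2 : ((((a+b)^2)⁻¹ : ℝ) : ℂ) * (((a+b)^2 : ℝ) : ℂ) = 1 := by
      rw [← Complex.ofReal_mul, inv_mul_cancel₀ (by positivity)]
      norm_num
    rw [d1, d2, one_smul]
  have hMtop : (((a * b / (a + b) : ℝ) : ℂ) • (1 : Matrix (Fin n) (Fin n) ℂ)
      - (T - T*Sd*T)).PosSemidef := by
    rw [hscale]
    exact psd_smul_real hNpsd (by positivity)
  exact norm_le_of_psd_le hMpsd hcge hMtop


set_option maxHeartbeats 1000000 in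
/-- Norm bound for the one-sided perturbation. -/
theorem one_sided_perturbation_norm_le {n : ℕ}
    (A B X Sd ABd : Matrix (Fin n) (Fin n) ℂ)
    (hA : A.PosSemidef) (hB : B.PosSemidef) (hX : X.PosSemidef)
    (hABne : A + B ≠ 0) (hXne : X ≠ 0)
    (hSd : MPInv (A + X + B) Sd) (hABd : MPInv (A + B) ABd) :
    ‖(A + X) * Sd * B - A * ABd * B‖
      ≤ ‖ABd * B‖ ^ 2 * ‖A + B‖ * ‖X‖ / (‖A + B‖ + ‖X‖) := by
  have hT : (A + B).PosSemidef := hA.add hB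
  have hABdh : ABd.IsHermitian := mpinv_herm hT.1 hABd
  have hSeq : A + X + B = (A + B) + X := by abel
  have hSd' : MPInv ((A + B) + X) Sd := by rwa [hSeq] at hSd
  have hS : ((A + B) + X).PosSemidef := hT.add hX
  have hSdh : Sd.IsHermitian := mpinv_herm hS.1 hSd'
  obtain ⟨hBSd, hSdB⟩ := absorb hS hB
    (show ((A + B) + X - B).PosSemidef by
      rw [show (A + B) + X - B = A + X by abel]; exact hA.add hX) hSd' hSdh
  obtain ⟨hBABd, hABdB⟩ := absorb hT hB
    (show (A + B - B).PosSemidef by rw [add_sub_cancel_right]; exact hA) hABd hABdh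
  have h1 : (A + X) * Sd * B = B - B * Sd * B := by
    have e : A + X = ((A + B) + X) - B := by abel
    rw [e, sub_mul, sub_mul, hSdB]
  have h2 : A * ABd * B = B - B * ABd * B := by
    have e : A = (A + B) - B := by abel
    rw [e, sub_mul, sub_mul, hABdB]
  set Q := ABd * B with hQ
  have hTQ : (A + B) * Q = B := by rw [hQ, ← mul_assoc]; exact hABdB
  have hQT : Qᴴ * (A + B) = B := by
    have := congrArg Matrix.conjTranspose hTQ
    rwa [Matrix.conjTranspose_mul, hT.1.eq, hB.1.eq] at this
  have hD : (A + X) * Sd * B - A * ABd * B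
      = Qᴴ * ((A + B) - (A + B) * Sd * (A + B)) * Q := by
    rw [h1, h2]
    have r1 : Qᴴ * (A + B) * Q = B * ABd * B := by
      rw [hQT, hQ, ← mul_assoc]
    have r2 : Qᴴ * ((A + B) * Sd * (A + B)) * Q = B * Sd * B := by
      calc Qᴴ * ((A + B) * Sd * (A + B)) * Q = (Qᴴ * (A + B)) * Sd * ((A + B) * Q) := by
            noncomm_ring
      _ = B * Sd * B := by rw [hQT, hTQ]
    calc (B - B * Sd * B) - (B - B * ABd * B) = B * ABd * B - B * Sd * B := by abel
    _ = Qᴴ * (A + B) * Q - Qᴴ * ((A + B) * Sd * (A + B)) * Q := by rw [r1, r2]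
    _ = Qᴴ * ((A + B) - (A + B) * Sd * (A + B)) * Q := by noncomm_ring
  have hM := central hT hX hSd' hABne hXne
  have hn1 : ‖(A + X) * Sd * B - A * ABd * B‖
      ≤ ‖Q‖ ^ 2 * ‖(A + B) - (A + B) * Sd * (A + B)‖ := by
    rw [hD]
    calc ‖Qᴴ * ((A + B) - (A + B) * Sd * (A + B)) * Q‖
        ≤ ‖Qᴴ * ((A + B) - (A + B) * Sd * (A + B))‖ * ‖Q‖ := Matrix.l2_opNorm_mul _ _
    _ ≤ (‖Qᴴ‖ * ‖(A + B) - (A + B) * Sd * (A + B)‖) * ‖Q‖ :=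
        mul_le_mul_of_nonneg_right (Matrix.l2_opNorm_mul _ _) (norm_nonneg _)
    _ = ‖Q‖ ^ 2 * ‖(A + B) - (A + B) * Sd * (A + B)‖ := by
        rw [Matrix.l2_opNorm_conjTranspose]; ring
  have hn2 : ‖Q‖ ^ 2 * ‖(A + B) - (A + B) * Sd * (A + B)‖
      ≤ ‖Q‖ ^ 2 * (‖A + B‖ * ‖X‖ / (‖A + B‖ + ‖X‖)) :=
    mul_le_mul_of_nonneg_left hM (sq_nonneg _)
  calc ‖(A + X) * Sd * B - A * ABd * B‖
      ≤ ‖Q‖ ^ 2 * (‖A + B‖ * ‖X‖ / (‖A + B‖ + ‖X‖)) := hn1.trans hn2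
  _ = ‖Q‖ ^ 2 * ‖A + B‖ * ‖X‖ / (‖A + B‖ + ‖X‖) := by ring
end
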